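/- arXiv:2204.08188 — 5 statements merged into one kernel-verified Lean document; each statement's English description precedes it below -/
import Mathlib

section
/- In the setting of the context, each basepoint A_i lies in B_i, and the number of indices i ∈ {1,…,p} for which the fundamental group π₁(B_i, A_i) is a nontrivial group is at most the dimension of the complex span of Φ in t*. In particular, the number of nontrivial factors of the pure local wild mapping class group is at most the rank of the root system, independently of p. -/
open CategoryTheory in
theorem fg_subsingleton' (X : Type*) [TopologicalSpace X] [SimplyConnectedSpace X] (x : X) :
    Subsingleton (FundamentalGroup X x) :=
  ⟨fun _ _ => Subsingleton.elim (α := Path.Homotopic.Quotient x x) _ _⟩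

theorem tri_li' {V : Type*} [AddCommGroup V] [Module ℂ V] {ι : Type*} (v : ι → (V →ₗ[ℂ] ℂ))
    (e : ι → V) (r : ι → ℕ) (hr : Function.Injective r)
    (hdiag : ∀ i, v i (e i) ≠ 0) (htri : ∀ i j, r i < r j → v i (e j) = 0) :
    LinearIndependent ℂ v := by
  classical
  rw [linearIndependent_iff']
  intro s g hsum i his
  induction s using Finset.strongInduction generalizing i with
  | _ s ih =>
    have hne : s.Nonempty := ⟨i, his⟩
    obtain ⟨m, hms, hmax⟩ := s.exists_max_image r hne
    have hgm : g m = 0 := by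
      have := congrArg (fun f : V →ₗ[ℂ] ℂ => f (e m)) hsum
      simp only [LinearMap.coe_sum, Finset.sum_apply, LinearMap.smul_apply,
        LinearMap.zero_apply, smul_eq_mul] at this
      have heval : ∀ j ∈ s, g j * v j (e m) = if j = m then g m * v m (e m) else 0 := by
        intro j hjs
        by_cases hjm : j = m
        · simp [hjm]
        · have : r j < r m ∨ r j = r m := lt_or_eq_of_le (hmax j hjs)
          rcases this with h | h
          · simp [htri j m h, hjm]
          · exact absurd (hr h) hjm
      rw [Finset.sum_congr rfl heval, Finset.sum_ite_eq' s m _] at this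
      simp [hms] at this
      rcases this with h | h
      · exact h
      · exact absurd h (hdiag m)
    by_cases him : i = m
    · rw [him]; exact hgm
    · refine ih (s.erase m) (Finset.erase_ssubset hms) ?_ i (Finset.mem_erase.2 ⟨him, his⟩)
      rw [← hsum, ← Finset.add_sum_erase s _ hms, hgm, zero_smul, zero_add]

/-- Each basepoint coefficient `A_i` lies in the factor `B_i` of the universal deformation
space, and the number of indices `i ∈ {1,…,p}` whose factor has nontrivial fundamental group
is at most the rank of `Φ` (the dimension of its complex span), independently of `p`. -/
theorem stmt5 (t : Type*) [AddCommGroup t] [Module ℂ t] [FiniteDimensional ℂ t]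
    [TopologicalSpace t] [IsTopologicalAddGroup t] [ContinuousSMul ℂ t] [T2Space t]
    (Φ : Set (t →ₗ[ℂ] ℂ)) (hfin : Φ.Finite) (hne : ∀ α ∈ Φ, α ≠ 0)
    (p : ℕ) (hp : 1 ≤ p) (A : ℕ → t)
    -- `d α` is the largest `i ∈ {1,…,p}` with `α (A_i) ≠ 0`, and `d α = 0` if all vanish:
    (d : (t →ₗ[ℂ] ℂ) → ℕ)
    (hd : ∀ α ∈ Φ, d α ≤ p ∧ (∀ i : ℕ, d α < i → i ≤ p → α (A i) = 0) ∧
      (1 ≤ d α → α (A (d α)) ≠ 0))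
    (B : ℕ → Set t)
    (hB : ∀ i : ℕ, B i = {a | (∀ α ∈ Φ, d α < i → α a = 0) ∧ ∀ α ∈ Φ, d α = i → α a ≠ 0}) :
    (∀ i : ℕ, 1 ≤ i → i ≤ p → A i ∈ B i) ∧
    {i : ℕ | 1 ≤ i ∧ i ≤ p ∧
        ∃ h : A i ∈ B i, Nontrivial (FundamentalGroup (B i) ⟨A i, h⟩)}.ncard
      ≤ Module.finrank ℂ (Submodule.span ℂ Φ) := by
  classical
  have part1 : ∀ i : ℕ, 1 ≤ i → i ≤ p → A i ∈ B i := by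
    intro i h1 hip
    rw [hB]
    refine ⟨fun α hα hlt => (hd α hα).2.1 i hlt hip, fun α hα heq => ?_⟩
    have := (hd α hα).2.2 (heq ▸ h1)
    rwa [heq] at this
  refine ⟨part1, ?_⟩
  set S := {i : ℕ | 1 ≤ i ∧ i ≤ p ∧
      ∃ h : A i ∈ B i, Nontrivial (FundamentalGroup (B i) ⟨A i, h⟩)} with hSdef
  have hSroot : ∀ i ∈ S, ∃ α ∈ Φ, d α = i := by
    intro i hi
    by_contra hno
    push_neg at hno
    obtain ⟨h1, hip, hmem, hnt⟩ := hi
    have hBi : B i = {a : t | ∀ α ∈ Φ, d α < i → α a = 0} := by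
      rw [hB]; ext a
      simp only [Set.mem_setOf_eq, and_iff_left_iff_imp]
      exact fun _ α hα heq => absurd heq (hno α hα)
    haveI : ContinuousSMul ℝ t := IsScalarTower.continuousSMul ℂ
    have hconv : Convex ℝ (B i) := by
      rw [hBi]
      rintro x hx y hy a b _ _ _ α hα hlt
      show α (a • x + b • y) = 0
      rw [map_add, LinearMap.map_smul_of_tower, LinearMap.map_smul_of_tower,
        hx α hα hlt, hy α hα hlt, smul_zero, smul_zero, add_zero]
    haveI : ContractibleSpace (B i) := hconv.contractibleSpace ⟨A i, hmem⟩
    haveI := fg_subsingleton' (B i) ⟨A i, hmem⟩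
    haveI := hnt
    exact false_of_nontrivial_of_subsingleton (FundamentalGroup (B i) ⟨A i, hmem⟩)
  have hSfin : S.Finite :=
    (Set.finite_Icc 1 p).subset (fun i hi => Set.mem_Icc.2 ⟨hi.1, hi.2.1⟩)
  choose f hfΦ hfd using hSroot
  let v : S → (t →ₗ[ℂ] ℂ) := fun i => f i i.2
  have hli : LinearIndependent ℂ v := by
    refine tri_li' v (fun i : S => A i) (fun i : S => (i : ℕ)) Subtype.coe_injective
      (fun i => ?_) (fun i j hij => ?_)
    · have h1 : 1 ≤ (i : ℕ) := i.2.1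
      have := (hd (v i) (hfΦ i i.2)).2.2 (by rw [hfd i i.2]; exact h1)
      rwa [hfd i i.2] at this
    · have hdv : d (v i) = (i : ℕ) := hfd i i.2
      exact (hd (v i) (hfΦ i i.2)).2.1 (j : ℕ) (hdv ▸ hij) j.2.2.1
  let w : S → Submodule.span ℂ Φ := fun i => ⟨v i, Submodule.subset_span (hfΦ i i.2)⟩
  have hw : LinearIndependent ℂ w :=
    LinearIndependent.of_comp (Submodule.span ℂ Φ).subtype hli
  haveI : Fintype S := hSfin.fintype
  have hcard : Fintype.card S ≤ Module.finrank ℂ (Submodule.span ℂ Φ) :=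
    hw.fintype_card_le_finrank
  calc S.ncard = Fintype.card S := by
        rw [← Nat.card_coe_set_eq, Nat.card_eq_fintype_card]
    _ ≤ Module.finrank ℂ (Submodule.span ℂ Φ) := hcard
end

section
/- Let Φ be a finite set of nonzero linear functionals on a finite-dimensional complex vector space t, let A ∈ t, let Φ_h := {α ∈ Φ : α(A) = 0}, and set U := ⋂_{α∈Φ_h} ker α and W := ⋂_{α∈Φ} ker α. If dim_ℂ U = dim_ℂ W + 1, then the fundamental group π₁(B(Φ_h, Φ), A) is infinite cyclic, i.e. isomorphic to ℤ. -/
open Complex unitInterval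

noncomputable section

namespace Stmt6Aux

lemma min_sub_min_le {t a d : ℝ} (hd : 0 ≤ d) : |min t (a + d) - min t a| ≤ d := by
  have h1 : min t a ≤ min t (a + d) := min_le_min le_rfl (by linarith)
  have h2 : min t (a + d) ≤ min t a + d := by
    rcases le_total t a with h | h
    · rw [min_eq_left (by linarith), min_eq_left h]; linarith
    · rw [min_eq_right h]; exact min_le_right _ _
  rw [abs_le]; constructor <;> linarith

lemma prod_div_telescope {f : ℕ → ℂ} (hf : ∀ k, f k ≠ 0) (N : ℕ) :
    ∏ k ∈ Finset.range N, (f (k+1) / f k) = f N / f 0 := by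
  induction N with
  | zero => simp [div_self (hf 0)]
  | succ n ih =>
    rw [Finset.prod_range_succ, ih, mul_comm, div_mul_div_cancel₀]
    exact hf n

/-- One-parameter family lifting along `Complex.exp`. -/
lemma exists_lift (F : C(unitInterval × unitInterval, ℂ)) (hF : ∀ p, F p ≠ 0)
    (l0 : unitInterval → ℂ) (hl0c : Continuous l0) (hl0 : ∀ x, Complex.exp (l0 x) = F (x, 0)) :
    ∃ L : unitInterval × unitInterval → ℂ, Continuous L ∧
      (∀ x, L (x, 0) = l0 x) ∧ ∀ p, Complex.exp (L p) = F p := by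
  obtain ⟨p₀, -, hp₀⟩ := isCompact_univ.exists_isMinOn Set.univ_nonempty
    (F.continuous.norm).continuousOn
  set m := ‖F p₀‖ with hm
  have hmpos : 0 < m := norm_pos_iff.mpr (hF p₀)
  have hmle : ∀ p, m ≤ ‖F p‖ := fun p => hp₀ (Set.mem_univ p)
  obtain ⟨δ, hδpos, hδ⟩ := Metric.uniformContinuous_iff.mp
    (CompactSpace.uniformContinuous_of_continuous F.continuous) m hmpos
  obtain ⟨n, hn⟩ := exists_nat_one_div_lt hδpos
  set N : ℕ := n + 1 with hN
  have hNpos : (0:ℝ) < N := by positivity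
  have hNlt : (1:ℝ)/N < δ := by
    have h : ((N:ℝ)) = (n:ℝ) + 1 := by rw [hN]; push_cast; ring
    rw [h]; exact hn
  have hmem : ∀ (k : ℕ) (t : unitInterval), min (t:ℝ) ((k:ℝ)/N) ∈ Set.Icc (0:ℝ) 1 :=
    fun k t => ⟨le_min t.2.1 (by positivity), min_le_of_left_le t.2.2⟩
  set θ : ℕ → unitInterval → unitInterval :=
    fun k t => ⟨min (t:ℝ) ((k:ℝ)/N), hmem k t⟩ with hθ
  have θcont : ∀ k, Continuous fun t => θ k t :=
    fun k => Continuous.subtype_mk (continuous_subtype_val.min continuous_const) _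
  have θ0 : ∀ t : unitInterval, θ 0 t = 0 := fun t => Subtype.ext (by
    simp only [hθ, Nat.cast_zero, zero_div]
    exact min_eq_right t.2.1)
  have θN : ∀ t, θ N t = t := fun t => Subtype.ext (by
    simp only [hθ]
    rw [div_self (ne_of_gt hNpos)]
    exact min_eq_left t.2.2)
  have θat0 : ∀ k, θ k 0 = 0 := fun k => Subtype.ext (by
    simp only [hθ, Set.Icc.coe_zero]
    exact min_eq_left (by positivity))
  have θdist : ∀ k (t : unitInterval),
      |((θ (k+1) t : unitInterval):ℝ) - ((θ k t : unitInterval):ℝ)| ≤ 1/N := by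
    intro k t
    have hcast : (((k+1:ℕ)):ℝ)/(N:ℝ) = (k:ℝ)/N + 1/N := by push_cast; ring
    show |min (t:ℝ) ((((k+1:ℕ)):ℝ)/(N:ℝ)) - min (t:ℝ) ((k:ℝ)/N)| ≤ 1/N
    rw [hcast]
    exact min_sub_min_le (by positivity)
  have key : ∀ (x t : unitInterval) k, ‖F (x, θ (k+1) t) / F (x, θ k t) - 1‖ < 1 := by
    intro x t k
    have hd : dist (F (x, θ (k+1) t)) (F (x, θ k t)) < m := by
      apply hδ
      rw [Prod.dist_eq]
      apply max_lt (by simpa using hδpos)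
      calc dist (θ (k+1) t) (θ k t) ≤ 1/N := by
            rw [Subtype.dist_eq, Real.dist_eq]; exact θdist k t
        _ < δ := hNlt
    have hb : m ≤ ‖F (x, θ k t)‖ := hmle _
    have hbpos : (0:ℝ) < ‖F (x, θ k t)‖ := lt_of_lt_of_le hmpos hb
    have hrw : F (x, θ (k+1) t) / F (x, θ k t) - 1
        = (F (x, θ (k+1) t) - F (x, θ k t)) / F (x, θ k t) :=
      div_sub_one (hF _)
    rw [hrw, norm_div, div_lt_one hbpos]
    calc ‖F (x, θ (k+1) t) - F (x, θ k t)‖ = dist (F (x, θ (k+1) t)) (F (x, θ k t)) :=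
          (dist_eq_norm _ _).symm
      _ < m := hd
      _ ≤ _ := hb
  have slit : ∀ (x t : unitInterval) k, F (x, θ (k+1) t) / F (x, θ k t) ∈ slitPlane := by
    intro x t k
    rw [Complex.mem_slitPlane_iff]
    left
    have h := key x t k
    have h2 := Complex.abs_re_le_norm (F (x, θ (k+1) t) / F (x, θ k t) - 1)
    rw [Complex.sub_re, Complex.one_re] at h2
    have h3 := abs_lt.mp (lt_of_le_of_lt h2 h)
    linarith [h3.1]
  refine ⟨fun p => l0 p.1 + ∑ k ∈ Finset.range N,
      Complex.log (F (p.1, θ (k+1) p.2) / F (p.1, θ k p.2)), ?_, ?_, ?_⟩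
  · apply Continuous.add (hl0c.comp continuous_fst)
    apply continuous_finset_sum
    intro k _
    rw [continuous_iff_continuousAt]
    intro p
    have hcont : Continuous fun p : unitInterval × unitInterval =>
        F (p.1, θ (k+1) p.2) / F (p.1, θ k p.2) :=
      (F.continuous.comp (continuous_fst.prodMk ((θcont (k+1)).comp continuous_snd))).div
        (F.continuous.comp (continuous_fst.prodMk ((θcont k).comp continuous_snd)))
        (fun p => hF _)
    exact ContinuousAt.clog hcont.continuousAt (slit p.1 p.2 k)
  · intro x
    show l0 x + ∑ k ∈ Finset.range N,
        Complex.log (F (x, θ (k+1) 0) / F (x, θ k 0)) = l0 x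
    rw [Finset.sum_eq_zero, add_zero]
    intro k _
    rw [θat0, θat0, div_self (hF _), Complex.log_one]
  · rintro ⟨x, t⟩
    show Complex.exp (l0 x + ∑ k ∈ Finset.range N,
        Complex.log (F (x, θ (k+1) t) / F (x, θ k t))) = F (x, t)
    rw [Complex.exp_add, Complex.exp_sum]
    have hprod : ∏ k ∈ Finset.range N, Complex.exp (Complex.log (F (x, θ (k+1) t) / F (x, θ k t)))
        = ∏ k ∈ Finset.range N, (F (x, θ (k+1) t) / F (x, θ k t)) :=
      Finset.prod_congr rfl fun k _ => Complex.exp_log (div_ne_zero (hF _) (hF _))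
    rw [hprod, prod_div_telescope (f := fun k => F (x, θ k t)) (fun k => hF _) N,
      θN, θ0, hl0, mul_comm, div_mul_cancel₀ _ (hF _)]

lemma exists_path_lift (γ : unitInterval → ℂ) (hc : Continuous γ) (hγ : ∀ t, γ t ≠ 0) :
    ∃ ℓ : unitInterval → ℂ, Continuous ℓ ∧ ℓ 0 = Complex.log (γ 0) ∧
      ∀ t, Complex.exp (ℓ t) = γ t := by
  obtain ⟨L, hLc, hL0, hLe⟩ := exists_lift ⟨fun p => γ p.2, hc.comp continuous_snd⟩
    (fun p => hγ _) (fun _ => Complex.log (γ 0)) continuous_const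
    (fun x => Complex.exp_log (hγ 0))
  exact ⟨fun t => L (0, t), hLc.comp (continuous_const.prodMk continuous_id),
    hL0 0, fun t => hLe (0, t)⟩

/-- A continuous integer-valued function on the interval has equal endpoints. -/
lemma int_valued_const (f : unitInterval → ℝ) (hf : Continuous f)
    (h : ∀ s, ∃ n : ℤ, f s = n) : f 1 = f 0 := by
  set g : ℝ → ℝ := f ∘ Set.projIcc 0 1 zero_le_one with hg
  have hgc : Continuous g := hf.comp continuous_projIcc
  have hgi : ∀ x, ∃ n : ℤ, g x = n := fun x => h _
  have hg0 : g 0 = f 0 := by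
    simp [hg, Set.projIcc_left]
  have hg1 : g 1 = f 1 := by
    simp [hg, Set.projIcc_right]
  by_contra hne
  obtain ⟨n₀, h₀⟩ := hgi 0
  obtain ⟨n₁, h₁⟩ := hgi 1
  have hnn : n₀ ≠ n₁ := by
    rintro rfl
    exact hne (by rw [← hg1, ← hg0, h₀, h₁])
  have main : ∀ (c : ℝ), c ∈ Set.Icc (g 0) (g 1) ∪ Set.Icc (g 1) (g 0) → ∃ m : ℤ, c = m := by
    rintro c (hc | hc)
    · obtain ⟨x, -, hx⟩ := intermediate_value_Icc zero_le_one hgc.continuousOn hc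
      obtain ⟨m, hm⟩ := hgi x
      exact ⟨m, by rw [← hx, hm]⟩
    · obtain ⟨x, -, hx⟩ := intermediate_value_Icc' zero_le_one hgc.continuousOn hc
      obtain ⟨m, hm⟩ := hgi x
      exact ⟨m, by rw [← hx, hm]⟩
  rcases lt_or_gt_of_ne hnn with hlt | hlt
  · have h5 : (n₀:ℝ) + 1 ≤ (n₁:ℝ) := by exact_mod_cast Int.add_one_le_iff.mpr hlt
    obtain ⟨m, hm⟩ := main ((n₀:ℝ) + 1/2)
      (Or.inl ⟨by rw [h₀]; linarith, by rw [h₁]; linarith⟩)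
    have h6 : ((2*m : ℤ):ℝ) = ((2*n₀ + 1 : ℤ):ℝ) := by push_cast; linarith
    have := Int.cast_injective h6
    omega
  · have h5 : (n₁:ℝ) + 1 ≤ (n₀:ℝ) := by exact_mod_cast Int.add_one_le_iff.mpr hlt
    obtain ⟨m, hm⟩ := main ((n₁:ℝ) + 1/2)
      (Or.inr ⟨by rw [h₁]; linarith, by rw [h₀]; linarith⟩)
    have h6 : ((2*m : ℤ):ℝ) = ((2*n₁ + 1 : ℤ):ℝ) := by push_cast; linarith
    have := Int.cast_injective h6
    omega

abbrev Cx := {z : ℂ // z ≠ 0}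

variable {p : Cx}

/-- The winding data for a loop in `ℂ \ {0}`. -/
lemma wind_exists (γ : Path p p) : ∃ n : ℤ, ∃ ℓ : unitInterval → ℂ, Continuous ℓ ∧
    (∀ t, Complex.exp (ℓ t) = (γ t : ℂ)) ∧ ℓ 1 = ℓ 0 + n * (2 * Real.pi * Complex.I) := by
  obtain ⟨ℓ, hc, -, he⟩ := exists_path_lift (fun t => (γ t : ℂ))
    (continuous_subtype_val.comp γ.continuous) (fun t => (γ t).2)
  have h1 : Complex.exp (ℓ 1) = Complex.exp (ℓ 0) := by
    rw [he, he, γ.source, γ.target]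
  obtain ⟨n, hn⟩ := Complex.exp_eq_exp_iff_exists_int.mp h1
  exact ⟨n, ℓ, hc, he, hn⟩

/-- The winding number of a loop in `ℂ \ {0}`. -/
noncomputable def wind (γ : Path p p) : ℤ := (wind_exists γ).choose

lemma wind_spec (γ : Path p p) : ∃ ℓ : unitInterval → ℂ, Continuous ℓ ∧
    (∀ t, Complex.exp (ℓ t) = (γ t : ℂ)) ∧
    ℓ 1 = ℓ 0 + (wind γ) * (2 * Real.pi * Complex.I) := (wind_exists γ).choose_spec

/-- Any lift computes the winding number. -/
lemma wind_unique (γ : Path p p) {ℓ : unitInterval → ℂ} (hc : Continuous ℓ)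
    (he : ∀ t, Complex.exp (ℓ t) = (γ t : ℂ)) {n : ℤ}
    (hn : ℓ 1 = ℓ 0 + n * (2 * Real.pi * Complex.I)) : wind γ = n := by
  obtain ⟨ℓ', hc', he', hn'⟩ := wind_spec γ
  set c : ℂ := 2 * Real.pi * Complex.I with hcdef
  have hcne : c ≠ 0 := Complex.two_pi_I_ne_zero
  set f : unitInterval → ℝ := fun s => (((ℓ s - ℓ' s) / c)).re with hf
  have hfc : Continuous f := (Complex.continuous_re.comp ((hc.sub hc').div_const c))
  have hfi : ∀ s, ∃ m : ℤ, f s = m := by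
    intro s
    have : Complex.exp (ℓ s) = Complex.exp (ℓ' s) := by rw [he, he']
    obtain ⟨m, hm⟩ := Complex.exp_eq_exp_iff_exists_int.mp this
    refine ⟨m, ?_⟩
    have : (ℓ s - ℓ' s) / c = (m : ℂ) := by
      rw [hm]; field_simp; rw [hcdef]; ring
    rw [hf]; simp only [this, Complex.intCast_re]
  have h10 := int_valued_const f hfc hfi
  have hdiff : ((ℓ 1 - ℓ' 1) / c) = ((ℓ 0 - ℓ' 0) / c) + ((n : ℂ) - (wind γ : ℂ)) := by
    rw [hn, hn']
    field_simp
    ring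
  have := congrArg Complex.re hdiff
  simp only [Complex.add_re, Complex.sub_re, Complex.intCast_re] at this
  have hre : f 1 = f 0 + ((n : ℝ) - (wind γ : ℝ)) := by
    rw [hf]; simpa using this
  rw [h10] at hre
  have : ((wind γ : ℤ) : ℝ) = ((n : ℤ) : ℝ) := by linarith
  exact_mod_cast this

lemma wind_homotopic (γ₀ γ₁ : Path p p) (h : γ₀.Homotopic γ₁) : wind γ₀ = wind γ₁ := by
  obtain ⟨H⟩ := h
  set c : ℂ := 2 * Real.pi * Complex.I with hcdef
  have hcne : c ≠ 0 := Complex.two_pi_I_ne_zero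
  have hp : (p : ℂ) ≠ 0 := p.2
  obtain ⟨L, hLc, hL0, hLe⟩ := exists_lift
    ⟨fun q => ((H q : Cx) : ℂ), continuous_subtype_val.comp H.continuous⟩
    (fun q => (H q).2) (fun _ => Complex.log (p : ℂ)) continuous_const
    (fun x => by
      show Complex.exp _ = ((H (x, 0) : Cx) : ℂ)
      rw [H.source x, Complex.exp_log hp])
  set f : unitInterval → ℝ := fun s => (((L (s, 1) - Complex.log (p:ℂ)) / c)).re with hf
  have hfc : Continuous f := Complex.continuous_re.comp
    (((hLc.comp (continuous_id.prodMk continuous_const)).sub continuous_const).div_const c)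
  have key : ∀ s, ∃ m : ℤ, L (s, 1) = Complex.log (p:ℂ) + m * c := by
    intro s
    have h1 : Complex.exp (L (s, 1)) = Complex.exp (Complex.log (p:ℂ)) := by
      rw [hLe (s, 1), Complex.exp_log hp]
      exact congrArg Subtype.val (H.target s)
    obtain ⟨m, hm⟩ := Complex.exp_eq_exp_iff_exists_int.mp h1
    exact ⟨m, hm⟩
  have hfi : ∀ s, ∃ m : ℤ, f s = m := by
    intro s
    obtain ⟨m, hm⟩ := key s
    refine ⟨m, ?_⟩
    have : (L (s, 1) - Complex.log (p:ℂ)) / c = (m : ℂ) := by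
      rw [hm]
      field_simp [hcne]; ring
    rw [hf]; simp only [this, Complex.intCast_re]
  have h10 := int_valued_const f hfc hfi
  -- winding of each endpoint loop
  have hwind : ∀ (s : unitInterval) (γ : Path p p), (∀ t, H (s, t) = γ t) →
      ∀ m : ℤ, L (s, 1) = Complex.log (p:ℂ) + m * c → wind γ = m := by
    intro s γ hst m hm
    refine wind_unique γ (ℓ := fun t => L (s, t))
      (hLc.comp (continuous_const.prodMk continuous_id)) (fun t => ?_) ?_
    · rw [hLe (s, t)]
      exact congrArg Subtype.val (hst t)
    · show L (s, 1) = L (s, 0) + (m : ℂ) * (2 * Real.pi * Complex.I)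
      rw [hm, hL0 s]
  obtain ⟨m₀, hm₀⟩ := key 0
  obtain ⟨m₁, hm₁⟩ := key 1
  have h₀ : wind γ₀ = m₀ := hwind 0 γ₀ (fun t => H.apply_zero t) m₀ hm₀
  have h₁ : wind γ₁ = m₁ := hwind 1 γ₁ (fun t => H.apply_one t) m₁ hm₁
  have e₀ : f 0 = m₀ := by
    rw [hf]; simp only
    rw [hm₀]
    have : (Complex.log (p:ℂ) + m₀ * c - Complex.log (p:ℂ)) / c = (m₀ : ℂ) := by
      field_simp [hcne]; ring
    rw [this, Complex.intCast_re]
  have e₁ : f 1 = m₁ := by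
    rw [hf]; simp only
    rw [hm₁]
    have : (Complex.log (p:ℂ) + m₁ * c - Complex.log (p:ℂ)) / c = (m₁ : ℂ) := by
      field_simp [hcne]; ring
    rw [this, Complex.intCast_re]
  rw [h₀, h₁]
  have : (m₁ : ℝ) = (m₀ : ℝ) := by rw [← e₀, ← e₁, h10]
  exact_mod_cast (this.symm)

lemma path_eq_of_coe {q q' : Cx} (δ : Path q q') (u t : unitInterval) (h : (u:ℝ) = (t:ℝ)) :
    δ u = δ t := congrArg δ (Subtype.ext h)

lemma wind_trans (γ γ' : Path p p) : wind (γ.trans γ') = wind γ + wind γ' := by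
  obtain ⟨ℓ, hc, -, he⟩ := exists_path_lift (fun t => ((γ.trans γ') t : ℂ))
    (continuous_subtype_val.comp (γ.trans γ').continuous) (fun t => ((γ.trans γ') t).2)
  set r1 : unitInterval → unitInterval := fun t =>
    ⟨(t:ℝ)/2, ⟨by have := t.2.1; linarith, by have := t.2.2; linarith⟩⟩ with hr1
  set r2 : unitInterval → unitInterval := fun t =>
    ⟨((t:ℝ)+1)/2, ⟨by have := t.2.1; linarith, by have := t.2.2; linarith⟩⟩ with hr2
  have r1c : Continuous r1 := Continuous.subtype_mk (continuous_subtype_val.div_const 2) _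
  have r2c : Continuous r2 := Continuous.subtype_mk
    ((continuous_subtype_val.add continuous_const).div_const 2) _
  have e1 : ∀ t : unitInterval, (γ.trans γ') (r1 t) = γ t := by
    intro t
    rw [Path.trans_apply]
    split_ifs with h
    · exact path_eq_of_coe γ _ t (by show 2 * ((t:ℝ)/2) = (t:ℝ); ring)
    · exact absurd (show ((r1 t):ℝ) ≤ 1/2 by
        show (t:ℝ)/2 ≤ 1/2
        have := t.2.2; linarith) h
  have e2 : ∀ t : unitInterval, (γ.trans γ') (r2 t) = γ' t := by
    intro t
    rw [Path.trans_apply]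
    split_ifs with h
    · have ht0 : (t:ℝ) = 0 := by
        have h1 : (((t:ℝ)+1)/2) ≤ 1/2 := h
        have h2 := t.2.1
        linarith
      have ht : t = 0 := Subtype.ext ht0
      subst ht
      rw [γ'.source]
      convert γ.target using 2
      apply Subtype.ext
      show 2 * ((((0:unitInterval):ℝ)+1)/2) = ((1:unitInterval):ℝ)
      norm_num
    · exact path_eq_of_coe γ' _ t (by
        show 2 * (((t:ℝ)+1)/2) - 1 = (t:ℝ); ring)
  have hmid : r1 1 = r2 0 := Subtype.ext
    (by show ((1:unitInterval):ℝ)/2 = (((0:unitInterval):ℝ)+1)/2; norm_num)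
  have hr10 : r1 0 = 0 := Subtype.ext
    (by show ((0:unitInterval):ℝ)/2 = ((0:unitInterval):ℝ); norm_num)
  have hr21 : r2 1 = 1 := Subtype.ext
    (by show (((1:unitInterval):ℝ)+1)/2 = ((1:unitInterval):ℝ); norm_num)
  have he1 : ∀ t, Complex.exp (ℓ (r1 t)) = (γ t : ℂ) := fun t => by rw [he (r1 t), e1 t]
  have he2 : ∀ t, Complex.exp (ℓ (r2 t)) = (γ' t : ℂ) := fun t => by rw [he (r2 t), e2 t]
  have hint1 : Complex.exp (ℓ (r1 1)) = Complex.exp (ℓ (r1 0)) := by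
    rw [he1 1, he1 0, γ.source, γ.target]
  obtain ⟨n₁, hn₁⟩ := Complex.exp_eq_exp_iff_exists_int.mp hint1
  have hint2 : Complex.exp (ℓ (r2 1)) = Complex.exp (ℓ (r2 0)) := by
    rw [he2 1, he2 0, γ'.source, γ'.target]
  obtain ⟨n₂, hn₂⟩ := Complex.exp_eq_exp_iff_exists_int.mp hint2
  have w1 : wind γ = n₁ := wind_unique γ (ℓ := fun t => ℓ (r1 t)) (hc.comp r1c) he1 hn₁
  have w2 : wind γ' = n₂ := wind_unique γ' (ℓ := fun t => ℓ (r2 t)) (hc.comp r2c) he2 hn₂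
  have w : wind (γ.trans γ') = n₁ + n₂ := by
    apply wind_unique _ hc he
    calc ℓ 1 = ℓ (r2 1) := by rw [hr21]
      _ = ℓ (r2 0) + n₂ * (2*Real.pi*Complex.I) := hn₂
      _ = ℓ (r1 1) + n₂ * (2*Real.pi*Complex.I) := by rw [hmid]
      _ = (ℓ (r1 0) + n₁ * (2*Real.pi*Complex.I)) + n₂ * (2*Real.pi*Complex.I) := by rw [hn₁]
      _ = ℓ 0 + ((n₁+n₂ : ℤ)) * (2*Real.pi*Complex.I) := by rw [hr10]; push_cast; ring
  rw [w, w1, w2]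

lemma wind_refl : wind (Path.refl p) = 0 := by
  apply wind_unique (Path.refl p) (ℓ := fun _ => Complex.log (p:ℂ)) continuous_const
  · intro t
    rw [Complex.exp_log p.2, Path.refl_apply]
  · simp

lemma homotopic_of_wind_zero (γ : Path p p) (h : wind γ = 0) :
    γ.Homotopic (Path.refl p) := by
  obtain ⟨ℓ, hc, he, hend⟩ := wind_spec γ
  rw [h] at hend
  simp only [Int.cast_zero, zero_mul, add_zero] at hend
  have c1 : Continuous fun q : unitInterval × unitInterval => (((q.1 : ℝ)) : ℂ) :=
    Complex.continuous_ofReal.comp (continuous_subtype_val.comp continuous_fst)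
  refine ⟨{ toFun := fun q => ⟨Complex.exp ((1 - ((q.1:ℝ):ℂ)) * ℓ q.2 + ((q.1:ℝ):ℂ) * ℓ 0),
              Complex.exp_ne_zero _⟩
          , continuous_toFun := Continuous.subtype_mk (Complex.continuous_exp.comp
              (((continuous_const.sub c1).mul (hc.comp continuous_snd)).add
                (c1.mul continuous_const))) _
          , map_zero_left := ?_
          , map_one_left := ?_
          , prop' := ?_ }⟩
  · intro x
    apply Subtype.ext
    show Complex.exp ((1 - (((0:unitInterval):ℝ):ℂ)) * ℓ x + (((0:unitInterval):ℝ):ℂ) * ℓ 0)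
      = (γ x : ℂ)
    rw [← he x]
    norm_num
  · intro x
    apply Subtype.ext
    show Complex.exp ((1 - (((1:unitInterval):ℝ):ℂ)) * ℓ x + (((1:unitInterval):ℝ):ℂ) * ℓ 0)
      = ((Path.refl p) x : ℂ)
    rw [Path.refl_apply, ← γ.source, ← he 0]
    norm_num
  · intro s x hx
    simp only [Set.mem_insert_iff, Set.mem_singleton_iff] at hx
    rcases hx with rfl | rfl
    · apply Subtype.ext
      show Complex.exp ((1 - ((s:ℝ):ℂ)) * ℓ 0 + ((s:ℝ):ℂ) * ℓ 0) = (γ 0 : ℂ)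
      rw [← he 0]
      ring_nf
    · apply Subtype.ext
      show Complex.exp ((1 - ((s:ℝ):ℂ)) * ℓ 1 + ((s:ℝ):ℂ) * ℓ 0) = (γ 1 : ℂ)
      rw [← he 1, hend]
      ring_nf

lemma exists_wind (n : ℤ) : ∃ γ : Path p p, wind γ = n := by
  have hp : (p:ℂ) ≠ 0 := p.2
  refine ⟨{ toFun := fun t => ⟨(p:ℂ) *
              Complex.exp ((n:ℂ) * (2*Real.pi*Complex.I) * ((t:ℝ):ℂ)),
              mul_ne_zero hp (Complex.exp_ne_zero _)⟩
          , continuous_toFun := Continuous.subtype_mk (continuous_const.mul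
              (Complex.continuous_exp.comp (continuous_const.mul
                (Complex.continuous_ofReal.comp continuous_subtype_val)))) _
          , source' := ?_
          , target' := ?_ }, ?_⟩
  · apply Subtype.ext
    show (p:ℂ) * Complex.exp ((n:ℂ) * (2*Real.pi*Complex.I) * (((0:unitInterval):ℝ):ℂ)) = (p:ℂ)
    norm_num
  · apply Subtype.ext
    show (p:ℂ) * Complex.exp ((n:ℂ) * (2*Real.pi*Complex.I) * (((1:unitInterval):ℝ):ℂ)) = (p:ℂ)
    rw [show (((1:unitInterval):ℝ):ℂ) = 1 by norm_num, mul_one,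
      Complex.exp_int_mul_two_pi_mul_I]
    ring
  · apply wind_unique _ (ℓ := fun t => Complex.log (p:ℂ) + (n:ℂ) * (2*Real.pi*Complex.I) * ((t:ℝ):ℂ))
      (continuous_const.add (continuous_const.mul
        (Complex.continuous_ofReal.comp continuous_subtype_val)))
    · intro t
      rw [Complex.exp_add, Complex.exp_log hp]
      rfl
    · show Complex.log (p:ℂ) + (n:ℂ) * (2*Real.pi*Complex.I) * (((1:unitInterval):ℝ):ℂ)
        = Complex.log (p:ℂ) + (n:ℂ) * (2*Real.pi*Complex.I) * (((0:unitInterval):ℝ):ℂ)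
          + (n:ℂ) * (2*Real.pi*Complex.I)
      norm_num

open CategoryTheory

attribute [local instance] Path.Homotopic.setoid

/-- Build an automorphism in the fundamental groupoid from a loop class. -/
def autOfQuot {X : Type*} [TopologicalSpace X] {x : X}
    (q : @Quiver.Hom (FundamentalGroupoid X) _ ⟨x⟩ ⟨x⟩) : FundamentalGroup X x := q

lemma autOfQuot_hom {X : Type*} [TopologicalSpace X] {x : X}
    (q : @Quiver.Hom (FundamentalGroupoid X) _ ⟨x⟩ ⟨x⟩) : autOfQuot q = q := rfl

lemma aut_mul_hom {X : Type*} [TopologicalSpace X] {x : X} (a b : FundamentalGroup X x) :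
    a * b = b ≫ a := rfl

lemma aut_one_hom {X : Type*} [TopologicalSpace X] {x : X} :
    (1 : FundamentalGroup X x) = 𝟙 (⟨x⟩ : FundamentalGroupoid X) := rfl

/-- Winding number on homotopy classes of loops. -/
noncomputable def windQ : @Quiver.Hom (FundamentalGroupoid Cx) _ ⟨p⟩ ⟨p⟩ → ℤ :=
  Quotient.lift wind (fun γ γ' h => wind_homotopic γ γ' h)

lemma windQ_mk (γ : Path p p) : windQ (p := p) ⟦γ⟧ = wind γ := rfl

noncomputable def windHom : FundamentalGroup Cx p →* Multiplicative ℤ where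
  toFun a := Multiplicative.ofAdd (windQ a)
  map_one' := by
    show Multiplicative.ofAdd (windQ (1 : FundamentalGroup Cx p)) = 1
    have h : (1 : FundamentalGroup Cx p) = ⟦Path.refl p⟧ :=
      FundamentalGroupoid.id_eq_path_refl _
    rw [h, windQ_mk, wind_refl]
    rfl
  map_mul' a b := by
    show Multiplicative.ofAdd (windQ (a * b))
      = Multiplicative.ofAdd (windQ a) * Multiplicative.ofAdd (windQ b)
    have h1 : a * b = b ≫ a := rfl
    rw [h1]
    induction b using Quotient.inductionOn with
    | h γb =>
    induction a using Quotient.inductionOn with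
    | h γa =>
    show Multiplicative.ofAdd (windQ ⟦γb.trans γa⟧) = _
    rw [windQ_mk, windQ_mk, windQ_mk,
      wind_trans, add_comm (wind γb), ofAdd_add]

lemma windHom_bijective : Function.Bijective (windHom (p := p)) := by
  constructor
  · rw [injective_iff_map_eq_one]
    intro a ha
    have h0 : windQ a = 0 := by
      have := congrArg Multiplicative.toAdd ha
      exact this
    obtain ⟨γ, hγ⟩ := Quotient.exists_rep a
    rw [← hγ, windQ_mk] at h0
    have hhom : a = 𝟙 (⟨p⟩ : FundamentalGroupoid Cx) := by
      rw [FundamentalGroupoid.id_eq_path_refl, ← hγ]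
      exact Quotient.sound (homotopic_of_wind_zero γ h0)
    exact hhom
  · intro n
    obtain ⟨γ, hγ⟩ := exists_wind (p := p) (Multiplicative.toAdd n)
    refine ⟨autOfQuot ⟦γ⟧, ?_⟩
    have h2 : windHom (p := p) (autOfQuot ⟦γ⟧) = Multiplicative.ofAdd (wind γ) := rfl
    rw [h2, hγ]
    simp

/-- The fundamental group of `ℂ \ {0}` is infinite cyclic. -/
noncomputable def windEquiv : FundamentalGroup Cx p ≃* Multiplicative ℤ :=
  MulEquiv.ofBijective windHom windHom_bijective

section Transfer

variable {X Y : Type*} [TopologicalSpace X] [TopologicalSpace Y] {x₀ : X}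

lemma homotopic_cast {x y x' y' : X} {γ γ' : Path x y} (hx : x' = x) (hy : y' = y)
    (h : γ.Homotopic γ') : (γ.cast hx hy).Homotopic (γ'.cast hx hy) := by
  subst hx; subst hy; exact h

lemma cast_trans {x y z x' y' z' : X} (γ : Path x y) (γ' : Path y z)
    (hx : x' = x) (hy : y' = y) (hz : z' = z) :
    (γ.trans γ').cast hx hz = (γ.cast hx hy).trans (γ'.cast hy hz) := by
  subst hx; subst hy; subst hz; rfl

variable (f : C(X, Y)) (g : C(Y, X)) (hg : g (f x₀) = x₀)

/-- The loop-class map induced by `f`. -/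
def Qf : @Quiver.Hom (FundamentalGroupoid X) _ ⟨x₀⟩ ⟨x₀⟩ →
    @Quiver.Hom (FundamentalGroupoid Y) _ ⟨f x₀⟩ ⟨f x₀⟩ :=
  Quotient.map (fun γ : Path x₀ x₀ => γ.map f.continuous) (fun _ _ h => h.map f)

/-- The loop-class map induced by `g`. -/
def Qg : @Quiver.Hom (FundamentalGroupoid Y) _ ⟨f x₀⟩ ⟨f x₀⟩ →
    @Quiver.Hom (FundamentalGroupoid X) _ ⟨x₀⟩ ⟨x₀⟩ :=
  Quotient.map (fun γ : Path (f x₀) (f x₀) => (γ.map g.continuous).cast hg.symm hg.symm)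
    (fun _ _ h => homotopic_cast hg.symm hg.symm (h.map g))

lemma Qf_comp (q q' : @Quiver.Hom (FundamentalGroupoid X) _ ⟨x₀⟩ ⟨x₀⟩) :
    Qf f (q ≫ q') = Qf f q ≫ Qf f q' := by
  induction q using Quotient.inductionOn with
  | h a =>
  induction q' using Quotient.inductionOn with
  | h b =>
  show Qf f (⟦a⟧ ≫ ⟦b⟧) = _
  rw [FundamentalGroupoid.comp_eq]
  show (⟦(a.trans b).map f.continuous⟧ :
    @Quiver.Hom (FundamentalGroupoid Y) _ ⟨f x₀⟩ ⟨f x₀⟩) = _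
  rw [Path.map_trans a b f.continuous]
  rfl

lemma Qg_comp (q q' : @Quiver.Hom (FundamentalGroupoid Y) _ ⟨f x₀⟩ ⟨f x₀⟩) :
    Qg f g hg (q ≫ q') = Qg f g hg q ≫ Qg f g hg q' := by
  induction q using Quotient.inductionOn with
  | h a =>
  induction q' using Quotient.inductionOn with
  | h b =>
  show Qg f g hg (⟦a⟧ ≫ ⟦b⟧) = _
  rw [FundamentalGroupoid.comp_eq]
  show (⟦((a.trans b).map g.continuous).cast hg.symm hg.symm⟧ :
    @Quiver.Hom (FundamentalGroupoid X) _ ⟨x₀⟩ ⟨x₀⟩) = _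
  rw [Path.map_trans a b g.continuous, cast_trans _ _ hg.symm hg.symm hg.symm]
  rfl

lemma QfQg (hfg : ∀ y, f (g y) = y)
    (q : @Quiver.Hom (FundamentalGroupoid Y) _ ⟨f x₀⟩ ⟨f x₀⟩) :
    Qf f (Qg f g hg q) = q := by
  induction q using Quotient.inductionOn with
  | h a =>
  show (⟦(((a.map g.continuous).cast hg.symm hg.symm).map f.continuous)⟧ :
    @Quiver.Hom (FundamentalGroupoid Y) _ ⟨f x₀⟩ ⟨f x₀⟩) = ⟦a⟧
  congr 1
  apply Path.ext
  funext t
  exact hfg (a t)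

lemma QgQf (G : C(unitInterval × X, X)) (hG0 : ∀ x, G (0, x) = x)
    (hG1 : ∀ x, G (1, x) = g (f x)) (hGb : ∀ s, G (s, x₀) = x₀)
    (q : @Quiver.Hom (FundamentalGroupoid X) _ ⟨x₀⟩ ⟨x₀⟩) :
    Qg f g hg (Qf f q) = q := by
  induction q using Quotient.inductionOn with
  | h a =>
  show (⟦((a.map f.continuous).map g.continuous).cast hg.symm hg.symm⟧ :
    @Quiver.Hom (FundamentalGroupoid X) _ ⟨x₀⟩ ⟨x₀⟩) = ⟦a⟧
  apply Quotient.sound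
  set δ : Path x₀ x₀ := ((a.map f.continuous).map g.continuous).cast hg.symm hg.symm with hδ
  refine ⟨{ toFun := fun q => G (unitInterval.symm q.1, a q.2)
          , continuous_toFun := G.continuous.comp
              ((unitInterval.continuous_symm.comp continuous_fst).prodMk
                (a.continuous.comp continuous_snd))
          , map_zero_left := ?_
          , map_one_left := ?_
          , prop' := ?_ }⟩
  · intro x
    show G (unitInterval.symm 0, a x) = δ x
    rw [unitInterval.symm_zero, hG1]
    rfl
  · intro x
    show G (unitInterval.symm 1, a x) = a x
    rw [unitInterval.symm_one, hG0]
  · intro s x hx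
    simp only [Set.mem_insert_iff, Set.mem_singleton_iff] at hx
    rcases hx with rfl | rfl
    · show G (unitInterval.symm s, a 0) = δ 0
      rw [a.source, hGb, δ.source]
    · show G (unitInterval.symm s, a 1) = δ 1
      rw [a.target, hGb, δ.target]

/-- Transfer of fundamental groups along a based deformation retraction. -/
noncomputable def fgEquivAux (hfg : ∀ y, f (g y) = y)
    (G : C(unitInterval × X, X)) (hG0 : ∀ x, G (0, x) = x)
    (hG1 : ∀ x, G (1, x) = g (f x)) (hGb : ∀ s, G (s, x₀) = x₀) :
    FundamentalGroup X x₀ ≃* FundamentalGroup Y (f x₀) where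
  toFun a := autOfQuot (Qf f a)
  invFun b := autOfQuot (Qg f g hg b)
  left_inv a := QgQf f g hg G hG0 hG1 hGb a
  right_inv b := QfQg f g hg hfg b
  map_mul' a b := Qf_comp f b a

end Transfer


end Stmt6Aux

/-- If the common kernel `U` of `Φ_h = {α ∈ Φ : α A = 0}` has dimension one more than the
common kernel `W` of all of `Φ`, then the fundamental group of the relative hyperplane
complement `B(Φ_h, Φ)` based at `A` is infinite cyclic (isomorphic to `ℤ`). -/
theorem stmt6 (t : Type*) [AddCommGroup t] [Module ℂ t] [FiniteDimensional ℂ t]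
    [TopologicalSpace t] [IsTopologicalAddGroup t] [ContinuousSMul ℂ t] [T2Space t]
    (Φ : Set (t →ₗ[ℂ] ℂ)) (hfin : Φ.Finite) (hne : ∀ α ∈ Φ, α ≠ 0)
    (A : t)
    (Φh : Set (t →ₗ[ℂ] ℂ)) (hΦh : Φh = {α ∈ Φ | α A = 0})
    (U W : Submodule ℂ t)
    (hU : U = ⨅ α ∈ Φh, LinearMap.ker α)
    (hW : W = ⨅ α ∈ Φ, LinearMap.ker α)
    (hdim : Module.finrank ℂ U = Module.finrank ℂ W + 1)
    (B : Set t)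
    (hB : B = {x | (∀ α ∈ Φh, α x = 0) ∧ ∀ β ∈ Φ \ Φh, β x ≠ 0}) :
    ∃ hAB : A ∈ B,
      Nonempty (FundamentalGroup B ⟨A, hAB⟩ ≃* Multiplicative ℤ) := by
  classical
  have hΦhsub : Φh ⊆ Φ := by rw [hΦh]; exact Set.sep_subset _ _
  have hAU : ∀ α ∈ Φh, α A = 0 := by rw [hΦh]; exact fun α hα => hα.2
  have hAB : A ∈ B := by
    rw [hB]
    refine ⟨hAU, ?_⟩
    rintro β ⟨hβΦ, hβn⟩ h0
    exact hβn (by rw [hΦh]; exact ⟨hβΦ, h0⟩)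
  have hUmem : ∀ x, x ∈ U ↔ ∀ α ∈ Φh, α x = 0 := by
    intro x
    rw [hU]
    simp [Submodule.mem_iInf]
  have hAUmem : A ∈ U := (hUmem A).mpr hAU
  have hWU : W ≤ U := by
    rw [hU, hW]
    exact biInf_mono fun i hi => hΦhsub hi
  obtain ⟨β₀, hβ₀Φ, hβ₀h⟩ : ∃ β₀, β₀ ∈ Φ ∧ β₀ ∉ Φh := by
    by_contra h
    push_neg at h
    have hΦeq : Φ = Φh := Set.Subset.antisymm h hΦhsub
    have : U = W := by rw [hU, hW, hΦeq]
    rw [this] at hdim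
    omega
  have hβ₀A : β₀ A ≠ 0 := fun h => hβ₀h (by rw [hΦh]; exact ⟨hβ₀Φ, h⟩)
  have hWker : ∀ β ∈ Φ, W ≤ LinearMap.ker β := fun β hβ => by
    rw [hW]; exact iInf₂_le β hβ
  -- the common kernel of `Φ \ Φh` inside `U` is exactly `W`
  have hKW : W = U ⊓ LinearMap.ker β₀ := by
    apply Submodule.eq_of_le_of_finrank_le (le_inf hWU (hWker β₀ hβ₀Φ))
    have hlt : U ⊓ LinearMap.ker β₀ < U := by
      refine lt_of_le_of_ne inf_le_left fun h => ?_
      have hA : A ∈ U ⊓ LinearMap.ker β₀ := h.symm ▸ hAUmem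
      exact hβ₀A (hA.2)
    have := Submodule.finrank_lt_finrank_of_lt hlt
    omega
  have keyid : ∀ x ∈ U, ∀ β ∈ Φ, β x = β₀ x / β₀ A * β A := by
    intro x hx β hβ
    have hmem : x - (β₀ x / β₀ A) • A ∈ U ⊓ LinearMap.ker β₀ := by
      refine Submodule.mem_inf.mpr ⟨sub_mem hx (Submodule.smul_mem _ _ hAUmem), ?_⟩
      rw [LinearMap.mem_ker, map_sub, map_smul, smul_eq_mul, div_mul_cancel₀ _ hβ₀A, sub_self]
    have hmemW : x - (β₀ x / β₀ A) • A ∈ W := hKW ▸ hmem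
    have h0 : β (x - (β₀ x / β₀ A) • A) = 0 := hWker β hβ hmemW
    rw [map_sub, map_smul, smul_eq_mul, sub_eq_zero] at h0
    exact h0
  have hAne : ∀ β ∈ Φ, β ∉ Φh → β A ≠ 0 := fun β hβ hβn h =>
    hβn (by rw [hΦh]; exact ⟨hβ, h⟩)
  have hBiff : ∀ x, x ∈ B ↔ (x ∈ U ∧ β₀ x ≠ 0) := by
    intro x
    rw [hB]
    constructor
    · rintro ⟨h1, h2⟩
      exact ⟨(hUmem x).mpr h1, h2 β₀ ⟨hβ₀Φ, hβ₀h⟩⟩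
    · rintro ⟨h1, h2⟩
      refine ⟨(hUmem x).mp h1, ?_⟩
      rintro β ⟨hβ, hβn⟩ h0
      have hk := keyid x h1 β hβ
      rw [h0] at hk
      exact (mul_ne_zero (div_ne_zero h2 hβ₀A) (hAne β hβ hβn)) hk.symm
  have hcont : Continuous β₀ := LinearMap.continuous_of_finiteDimensional β₀
  refine ⟨hAB, ?_⟩
  set x₀ : B := ⟨A, hAB⟩ with hx₀
  set f : C(B, Stmt6Aux.Cx) := ⟨fun x => ⟨β₀ x.1, ((hBiff x.1).mp x.2).2⟩,
    Continuous.subtype_mk (hcont.comp continuous_subtype_val) _⟩ with hfdef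
  have hgmem : ∀ z : Stmt6Aux.Cx, ((z.1 / β₀ A) • A : t) ∈ B := by
    intro z
    refine (hBiff _).mpr ⟨Submodule.smul_mem _ _ hAUmem, ?_⟩
    rw [map_smul, smul_eq_mul, div_mul_cancel₀ _ hβ₀A]
    exact z.2
  set g : C(Stmt6Aux.Cx, B) := ⟨fun z => ⟨(z.1 / β₀ A) • A, hgmem z⟩,
    Continuous.subtype_mk ((continuous_subtype_val.div_const (β₀ A)).smul continuous_const) _⟩
    with hgdef
  have hg : g (f x₀) = x₀ := by
    apply Subtype.ext
    show (β₀ A / β₀ A) • A = A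
    rw [div_self hβ₀A, one_smul]
  have hfg : ∀ z, f (g z) = z := by
    intro z
    apply Subtype.ext
    show β₀ ((z.1 / β₀ A) • A) = z.1
    rw [map_smul, smul_eq_mul, div_mul_cancel₀ _ hβ₀A]
  -- the deformation retraction
  have hGmem : ∀ (s : unitInterval) (x : B),
      ((1 - ((s:ℝ):ℂ)) • (x.1:t) + (((s:ℝ):ℂ) * (β₀ x.1 / β₀ A)) • A : t) ∈ B := by
    intro s x
    have hxU := ((hBiff x.1).mp x.2).1
    have hxne := ((hBiff x.1).mp x.2).2
    refine (hBiff _).mpr ⟨add_mem (Submodule.smul_mem _ _ hxU) (Submodule.smul_mem _ _ hAUmem), ?_⟩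
    have hval : β₀ ((1 - ((s:ℝ):ℂ)) • (x.1:t) + (((s:ℝ):ℂ) * (β₀ x.1 / β₀ A)) • A)
        = β₀ x.1 := by
      rw [map_add, map_smul, map_smul, smul_eq_mul, smul_eq_mul]
      field_simp
      ring
    rw [hval]
    exact hxne
  have c1 : Continuous fun q : unitInterval × B => ((q.1:ℝ):ℂ) :=
    Complex.continuous_ofReal.comp (continuous_subtype_val.comp continuous_fst)
  have c2 : Continuous fun q : unitInterval × B => (q.2.1 : t) :=
    continuous_subtype_val.comp continuous_snd
  set G : C(unitInterval × B, B) := ⟨fun q =>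
      ⟨(1 - ((q.1:ℝ):ℂ)) • (q.2.1:t) + (((q.1:ℝ):ℂ) * (β₀ q.2.1 / β₀ A)) • A, hGmem q.1 q.2⟩,
      Continuous.subtype_mk (((continuous_const.sub c1).smul c2).add
        ((c1.mul ((hcont.comp c2).div_const (β₀ A))).smul continuous_const)) _⟩ with hGdef
  have hG0 : ∀ x : B, G (0, x) = x := by
    intro x
    apply Subtype.ext
    show (1 - (((0:unitInterval):ℝ):ℂ)) • (x.1:t) + ((((0:unitInterval):ℝ):ℂ) * (β₀ x.1 / β₀ A)) • A = x.1
    norm_num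
  have hG1 : ∀ x : B, G (1, x) = g (f x) := by
    intro x
    apply Subtype.ext
    show (1 - (((1:unitInterval):ℝ):ℂ)) • (x.1:t) + ((((1:unitInterval):ℝ):ℂ) * (β₀ x.1 / β₀ A)) • A
      = (β₀ x.1 / β₀ A) • A
    norm_num
  have hGb : ∀ s : unitInterval, G (s, x₀) = x₀ := by
    intro s
    apply Subtype.ext
    show (1 - ((s:ℝ):ℂ)) • A + (((s:ℝ):ℂ) * (β₀ A / β₀ A)) • A = A
    rw [div_self hβ₀A, mul_one, ← add_smul]
    ring_nf
    rw [one_smul]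
  have E1 := Stmt6Aux.fgEquivAux f g hg hfg G hG0 hG1 hGb
  exact ⟨E1.trans Stmt6Aux.windEquiv⟩
end
end

section
/- Let A ∈ t, let Φ_h := {α ∈ Φ_{A_n} : α(A) = 0}, let J be the set of level sets of the coordinates of A (the classes of the relation 'i ~ j iff A_i = A_j' on {1,…,n+1}), let k := |J|, and let U := {x ∈ t : x_i = x_j whenever A_i = A_j}. Then: (i) the set of nonzero restrictions to U of the functionals in Φ_{A_n} equals exactly {u ↦ u_I − u_Î : I ≠ Î ∈ J}, where u_I denotes the common value of u ∈ U on the class I — so the restricted system is a root system of type A_{k−1} of rank dim U = k − 1; and (ii) the fundamental group of B(Φ_h, Φ_{A_n}) = {x ∈ t : x_i = x_j whenever A_i = A_j, and x_I ≠ x_Î for all distinct classes I ≠ Î ∈ J}, based at A, is isomorphic to the pure braid group PB_k. -/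
/-- The ordered configuration space of `k` points in `ℂ`. -/
abbrev Conf (k : ℕ) : Type := {f : Fin k → ℂ // Function.Injective f}

open CategoryTheory in
/-- Collapsing coordinates along the level classes of `A` gives a homotopy equivalence
between `B` and the configuration space of `k` points, where `k` is the number of classes. -/
theorem conf_homotopy_equiv {n k : ℕ} (A : Fin (n + 1) → ℂ)
    (e : Fin k ≃ ↥(Set.range A))
    (B : Set (Fin (n + 1) → ℂ))
    (hB : B = {x | (∑ i, x i = 0) ∧ (∀ i j, A i = A j → x i = x j) ∧
      ∀ i j, A i ≠ A j → x i ≠ x j}) :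
    Nonempty (ContinuousMap.HomotopyEquiv B (Conf k)) := by
  classical
  have hB' : ∀ y, y ∈ B ↔ ((∑ i, y i = 0) ∧ (∀ i j, A i = A j → y i = y j) ∧
      ∀ i j, A i ≠ A j → y i ≠ y j) := fun y => by rw [hB]; rfl
  set idx : Fin k → Fin (n + 1) := fun m => (e m).2.choose with hidxdef
  have hidx : ∀ m, A (idx m) = (e m).1 := fun m => (e m).2.choose_spec
  set σ : Fin (n + 1) → Fin k := fun i => e.symm ⟨A i, Set.mem_range_self i⟩ with hσdef
  have hσidx : ∀ m, σ (idx m) = m := by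
    intro m
    have h1 : (⟨A (idx m), Set.mem_range_self _⟩ : ↥(Set.range A)) = e m :=
      Subtype.ext (hidx m)
    simp only [hσdef, h1, Equiv.symm_apply_apply]
  have hAidxσ : ∀ i, A (idx (σ i)) = A i := by
    intro i
    rw [hidx (σ i)]
    simp [hσdef]
  -- the "weighted mean" map
  set c : Conf k → ℂ := fun f => (∑ i : Fin (n + 1), f.1 (σ i)) / (n + 1) with hcdef
  have hc : Continuous c := by
    apply Continuous.div_const
    exact continuous_finset_sum _
      (fun i _ => (continuous_apply (σ i)).comp continuous_subtype_val)
  have hn1 : ((n : ℂ) + 1) ≠ 0 := by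
    have : ((n + 1 : ℕ) : ℂ) ≠ 0 := Nat.cast_ne_zero.mpr (Nat.succ_ne_zero n)
    simpa using this
  -- φ : B → Conf k
  have hφinj : ∀ x : B, Function.Injective fun m => x.1 (idx m) := by
    intro x m m' h
    by_contra hne
    have hval : A (idx m) ≠ A (idx m') := by
      intro hA'
      exact hne (e.injective (Subtype.ext (by rw [← hidx m, ← hidx m', hA'])))
    have hx := (hB' x.1).mp x.2
    exact hx.2.2 _ _ hval h
  set φ : C(B, Conf k) := ⟨fun x => ⟨fun m => x.1 (idx m), hφinj x⟩, by
    apply Continuous.subtype_mk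
    exact continuous_pi fun m => (continuous_apply (idx m)).comp continuous_subtype_val⟩
    with hφdef
  -- ψ : Conf k → B
  have hψmem : ∀ f : Conf k, (fun i => f.1 (σ i) - c f) ∈ B := by
    intro f
    have hσeq : ∀ i j : Fin (n + 1), A i = A j → σ i = σ j := by
      intro i j hij
      have : (⟨A i, Set.mem_range_self i⟩ : ↥(Set.range A)) =
          ⟨A j, Set.mem_range_self j⟩ := Subtype.ext hij
      simp only [hσdef, this]
    rw [hB]
    refine ⟨?_, ?_, ?_⟩
    · have hsum : ∑ i : Fin (n + 1), (f.1 (σ i) - c f)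
          = (∑ i : Fin (n + 1), f.1 (σ i)) - ((n : ℂ) + 1) * c f := by
        rw [Finset.sum_sub_distrib, Finset.sum_const, Finset.card_univ, Fintype.card_fin,
          nsmul_eq_mul]
        push_cast
        ring
      rw [hsum, hcdef]
      field_simp
      ring
    · intro i j hij
      simp only [hσeq i j hij]
    · intro i j hij h
      have hσne : σ i ≠ σ j := by
        intro hss
        apply hij
        have := congrArg (fun m => ((e m : ↥(Set.range A)) : ℂ)) hss
        simpa [hσdef] using this
      exact hσne (f.2 (sub_left_inj.mp h))
  set ψ : C(Conf k, B) := ⟨fun f => ⟨fun i => f.1 (σ i) - c f, hψmem f⟩, by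
    apply Continuous.subtype_mk
    exact continuous_pi fun i =>
      ((continuous_apply (σ i)).comp continuous_subtype_val).sub hc⟩ with hψdef
  -- ψ ∘ φ = id
  have hψφ : ψ.comp φ = ContinuousMap.id B := by
    apply ContinuousMap.ext
    intro x
    apply Subtype.ext
    funext i
    have hx := (hB' x.1).mp x.2
    have hclass : ∀ i', x.1 (idx (σ i')) = x.1 i' := fun i' =>
      hx.2.1 _ _ (hAidxσ i')
    show x.1 (idx (σ i)) - (∑ i', x.1 (idx (σ i'))) / ((n : ℂ) + 1) = x.1 i
    simp only [hclass]
    rw [hx.1]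
    simp
  -- homotopy from φ ∘ ψ to id
  have hHinj : ∀ (t : ℝ) (f : Conf k),
      Function.Injective (fun m => f.1 m - ((1 - t : ℝ) : ℂ) * c f) := by
    intro t f m m' h
    exact f.2 (sub_left_inj.mp h)
  set H : ContinuousMap.Homotopy (φ.comp ψ) (ContinuousMap.id (Conf k)) := {
    toFun := fun p => ⟨fun m => p.2.1 m - ((1 - (p.1 : ℝ) : ℝ) : ℂ) * c p.2,
      hHinj (p.1 : ℝ) p.2⟩
    continuous_toFun := by
      apply Continuous.subtype_mk
      apply continuous_pi
      intro m
      apply Continuous.sub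
      · exact (continuous_apply m).comp (continuous_subtype_val.comp continuous_snd)
      · exact (Complex.continuous_ofReal.comp
          (continuous_const.sub (continuous_subtype_val.comp continuous_fst))).mul
          (hc.comp continuous_snd)
    map_zero_left := by
      intro f
      apply Subtype.ext
      funext m
      show f.1 m - ((1 - (0 : ℝ) : ℝ) : ℂ) * c f = (ψ f).1 (idx m)
      show f.1 m - ((1 - (0 : ℝ) : ℝ) : ℂ) * c f = f.1 (σ (idx m)) - c f
      rw [hσidx m]
      norm_num
    map_one_left := by
      intro f
      apply Subtype.ext
      funext m
      show f.1 m - ((1 - (1 : ℝ) : ℝ) : ℂ) * c f = f.1 m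
      norm_num }
  exact ⟨{ toFun := φ
           invFun := ψ
           left_inv := hψφ ▸ ContinuousMap.Homotopic.refl _
           right_inv := ⟨H⟩ }⟩

/-- Type-A restriction theorem: for `A` in the traceless Cartan subalgebra `t ⊆ ℂ^{n+1}` with
`k` distinct coordinate values (classes `J`), the restriction of `Φ_{A_n}` to
`U = Ker Φ_h` is a type-`A_{k-1}` root system of rank `dim U = k − 1`, and the fundamental
group of `B(Φ_h, Φ_{A_n})` based at `A` is the pure braid group `PB_k`. -/
theorem stmt10 (n : ℕ) (hn : 1 ≤ n)
    (A : Fin (n + 1) → ℂ) (hA : ∑ i, A i = 0)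
    (J : Set (Set (Fin (n + 1)))) (hJ : J = {S | ∃ i, S = {j | A j = A i}})
    (k : ℕ) (hk : k = J.ncard)
    (U : Submodule ℂ (Fin (n + 1) → ℂ))
    (hU : (U : Set (Fin (n + 1) → ℂ)) =
      {x | (∑ i, x i = 0) ∧ ∀ i j, A i = A j → x i = x j})
    (B : Set (Fin (n + 1) → ℂ))
    (hB : B = {x | (∑ i, x i = 0) ∧ (∀ i j, A i = A j → x i = x j) ∧
      ∀ i j, A i ≠ A j → x i ≠ x j}) :
    Module.finrank ℂ U = k - 1 ∧
    ({f : U → ℂ | ∃ i j : Fin (n + 1), i ≠ j ∧ f = (fun u => u.1 i - u.1 j) ∧ f ≠ 0}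
      = {f : U → ℂ | ∃ i j : Fin (n + 1), A i ≠ A j ∧ f = fun u => u.1 i - u.1 j}) ∧
    ∃ (hAB : A ∈ B) (c : Conf k),
      Nonempty (FundamentalGroup B ⟨A, hAB⟩ ≃* FundamentalGroup (Conf k) c) := by
  classical
  have hU' : ∀ x, x ∈ U ↔ ((∑ i, x i = 0) ∧ ∀ i j, A i = A j → x i = x j) := by
    intro x
    rw [← SetLike.mem_coe, hU]
    rfl
  haveI : Fintype ↥(Set.range A) := (Set.finite_range A).fintype
  -- k is the number of distinct values of A
  have hkcard : k = Fintype.card ↥(Set.range A) := by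
    have hJimg : J = (fun v : ℂ => {j | A j = v}) '' (Set.range A) := by
      rw [hJ]
      ext S
      constructor
      · rintro ⟨i, rfl⟩
        exact ⟨A i, Set.mem_range_self i, rfl⟩
      · rintro ⟨v, ⟨i, rfl⟩, rfl⟩
        exact ⟨i, rfl⟩
    have hinj : Set.InjOn (fun v : ℂ => {j | A j = v}) (Set.range A) := by
      rintro v ⟨i, rfl⟩ w hw h
      have h' : ({j | A j = A i} : Set (Fin (n + 1))) = {j | A j = w} := h
      have hi : i ∈ ({j | A j = A i} : Set (Fin (n + 1))) := rfl
      rw [h'] at hi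
      exact hi
    rw [hk, hJimg, Set.ncard_image_of_injOn hinj, ← Nat.card_coe_set_eq,
      Nat.card_eq_fintype_card]
  have hAmem : ∀ i, A i ∈ Set.range A := fun i => Set.mem_range_self i
  -- part (i), dimension
  have hdim : Module.finrank ℂ U = k - 1 := by
    set ℓ : (↥(Set.range A) → ℂ) →ₗ[ℂ] ℂ :=
      { toFun := fun g => ∑ i : Fin (n + 1), g ⟨A i, hAmem i⟩
        map_add' := by intro g h; simp [Finset.sum_add_distrib]
        map_smul' := by intro a g; simp [Finset.mul_sum] } with hℓdef
    have hn1 : ((n : ℂ) + 1) ≠ 0 := by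
      have : ((n + 1 : ℕ) : ℂ) ≠ 0 := Nat.cast_ne_zero.mpr (Nat.succ_ne_zero n)
      simpa using this
    have hsurj : Function.Surjective ℓ := by
      intro z
      refine ⟨fun _ => z / ((n : ℂ) + 1), ?_⟩
      show ∑ _i : Fin (n + 1), z / ((n : ℂ) + 1) = z
      rw [Finset.sum_const, Finset.card_univ, Fintype.card_fin, nsmul_eq_mul]
      push_cast
      field_simp
    -- linear map from U to ker ℓ
    have hchoose : ∀ v : ↥(Set.range A), A v.2.choose = v.1 := fun v => v.2.choose_spec
    set S : U →ₗ[ℂ] (↥(Set.range A) → ℂ) :=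
      { toFun := fun x => fun v => x.1 v.2.choose
        map_add' := by intro x y; rfl
        map_smul' := by intro a x; rfl } with hSdef
    have hSker : ∀ x : U, S x ∈ LinearMap.ker ℓ := by
      intro x
      have hx := (hU' x.1).mp x.2
      show ∑ i : Fin (n + 1), x.1 (hAmem i).choose = 0
      have : ∀ i, x.1 (hAmem i).choose = x.1 i := by
        intro i
        exact hx.2 _ _ (hchoose ⟨A i, hAmem i⟩)
      simp only [this]
      exact hx.1
    set T : U →ₗ[ℂ] ↥(LinearMap.ker ℓ) := LinearMap.codRestrict _ S hSker with hTdef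
    have hTbij : Function.Bijective T := by
      constructor
      · intro x y hxy
        have hSxy : S x = S y := congrArg Subtype.val hxy
        apply Subtype.ext
        funext i
        have hx := (hU' x.1).mp x.2
        have hy := (hU' y.1).mp y.2
        have h1 : x.1 i = S x ⟨A i, hAmem i⟩ :=
          (hx.2 _ _ (hchoose ⟨A i, hAmem i⟩)).symm
        have h2 : y.1 i = S y ⟨A i, hAmem i⟩ :=
          (hy.2 _ _ (hchoose ⟨A i, hAmem i⟩)).symm
        rw [h1, h2, hSxy]
      · rintro ⟨g, hg⟩
        have hgU : (fun i => g ⟨A i, hAmem i⟩) ∈ U := by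
          rw [hU']
          refine ⟨hg, ?_⟩
          intro i j hij
          have : (⟨A i, hAmem i⟩ : ↥(Set.range A)) = ⟨A j, hAmem j⟩ := Subtype.ext hij
          rw [this]
        refine ⟨⟨_, hgU⟩, ?_⟩
        apply Subtype.ext
        funext v
        show g ⟨A v.2.choose, hAmem _⟩ = g v
        congr 1
        exact Subtype.ext (hchoose v)
    have hUker : Module.finrank ℂ U = Module.finrank ℂ ↥(LinearMap.ker ℓ) :=
      (LinearEquiv.ofBijective T hTbij).finrank_eq
    have hrank := LinearMap.finrank_range_add_finrank_ker ℓ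
    have hrange : LinearMap.range ℓ = ⊤ := LinearMap.range_eq_top.mpr hsurj
    rw [hrange, finrank_top, Module.finrank_self] at hrank
    have hpi : Module.finrank ℂ (↥(Set.range A) → ℂ) = Fintype.card ↥(Set.range A) := by
      simp [Module.finrank_pi]
    rw [hpi, ← hkcard] at hrank
    omega
  refine ⟨hdim, ?_, ?_⟩
  -- part (i), root-system identification
  · ext f
    simp only [Set.mem_setOf_eq]
    constructor
    · rintro ⟨i, j, hij, rfl, hf⟩
      refine ⟨i, j, ?_, rfl⟩
      intro hAij
      apply hf
      funext u
      have hu := (hU' u.1).mp u.2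
      show u.1 i - u.1 j = 0
      rw [hu.2 i j hAij]
      ring
    · rintro ⟨i, j, hAij, rfl⟩
      have hij : i ≠ j := fun h => hAij (by rw [h])
      refine ⟨i, j, hij, rfl, ?_⟩
      -- construct an element of U separating the classes of i and j
      set m1 : ℕ := (Finset.univ.filter (fun l => A l = A i)).card with hm1
      set m2 : ℕ := (Finset.univ.filter (fun l => A l = A j)).card with hm2
      set u : Fin (n + 1) → ℂ := fun l =>
        (m2 : ℂ) * (if A l = A i then 1 else 0) - (m1 : ℂ) * (if A l = A j then 1 else 0)
        with hudef
      have huU : u ∈ U := by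
        rw [hU']
        constructor
        · show ∑ l, ((m2 : ℂ) * (if A l = A i then 1 else 0)
            - (m1 : ℂ) * (if A l = A j then 1 else 0)) = 0
          rw [Finset.sum_sub_distrib, ← Finset.mul_sum, ← Finset.mul_sum,
            Finset.sum_boole, Finset.sum_boole]
          simp only [← hm1, ← hm2]
          ring
        · intro a b hab
          show (m2 : ℂ) * (if A a = A i then 1 else 0)
              - (m1 : ℂ) * (if A a = A j then 1 else 0)
            = (m2 : ℂ) * (if A b = A i then 1 else 0)
              - (m1 : ℂ) * (if A b = A j then 1 else 0)
          rw [hab]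
      have hm1pos : 0 < m1 := Finset.card_pos.mpr ⟨i, by simp [hm1]⟩
      have hne : u i ≠ u j := by
        have hui : u i = (m2 : ℂ) := by
          show (m2 : ℂ) * (if A i = A i then 1 else 0)
            - (m1 : ℂ) * (if A i = A j then 1 else 0) = (m2 : ℂ)
          rw [if_pos rfl, if_neg hAij]
          ring
        have huj : u j = -(m1 : ℂ) := by
          show (m2 : ℂ) * (if A j = A i then 1 else 0)
            - (m1 : ℂ) * (if A j = A j then 1 else 0) = -(m1 : ℂ)
          rw [if_pos rfl, if_neg (fun h => hAij h.symm)]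
          ring
        rw [hui, huj]
        intro h
        have : ((m1 + m2 : ℕ) : ℂ) = 0 := by push_cast; linear_combination h
        have h0 : (m1 + m2 : ℕ) = 0 := by exact_mod_cast this
        omega
      intro h0
      exact hne (by
        have := congrFun h0 ⟨u, huU⟩
        simpa [sub_eq_zero] using this)
  -- part (ii)
  · have hAB : A ∈ B := by
      rw [hB]
      exact ⟨hA, fun _ _ h => h, fun _ _ h => h⟩
    have e : Fin k ≃ ↥(Set.range A) := (Fintype.equivFinOfCardEq hkcard.symm).symm
    obtain ⟨h⟩ := conf_homotopy_equiv A e B hB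
    exact ⟨hAB, h.toFun ⟨A, hAB⟩,
      ⟨(FundamentalGroupoidFunctor.equivOfHomotopyEquiv
        (X := TopCat.of B) (Y := TopCat.of (Conf k)) h).fullyFaithfulFunctor.mulEquivEnd
        ⟨⟨A, hAB⟩⟩⟩⟩
end

section
/- Let t := {x ∈ ℂ^{n+1} : Σ x_i = 0}, Φ := Φ_{A_n}, and fix A_1,…,A_p ∈ t with associated universal deformation space B_Q ⊆ t^p. For l ∈ {1,…,p+1} let ~_l be the equivalence relation on {1,…,n+1} defined by 'i ~_l j iff (A_k)_i = (A_k)_j for all k with l ≤ k ≤ p' (so ~_{p+1} has a single class). For l ∈ {1,…,p} and each equivalence class C of ~_{l+1}, let k_{l,C} be the number of ~_l-classes contained in C. Then there is a group isomorphism π₁(B_Q, (A_1,…,A_p)) ≅ ∏_{l=1}^{p} ∏_{C ∈ classes of ~_{l+1}} PB_{k_{l,C}}. -/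
open CategoryTheory ContinuousMap
noncomputable section General



/-- Fundamental group is invariant under homotopy equivalence. -/
def fgOfHE {X Y : Type} [TopologicalSpace X] [TopologicalSpace Y]
    (h : ContinuousMap.HomotopyEquiv X Y) (x : X) :
    FundamentalGroup X x ≃* FundamentalGroup Y (h.toFun x) :=
  (FundamentalGroupoidFunctor.equivOfHomotopyEquiv
    (X := TopCat.of X) (Y := TopCat.of Y) h).fullyFaithfulFunctor.mulEquivEnd
    ⟨x⟩

/-- Aut in a pi groupoid. -/
def autPiMulEquiv {I : Type*} {C : I → Type*} [∀ i, CategoryTheory.Groupoid (C i)]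
    (X : ∀ i, C i) : End X ≃* ∀ i, End (X i) where
  toFun α i := α i
  invFun f := fun i => f i
  left_inv α := rfl
  right_inv f := rfl
  map_mul' α β := rfl

open FundamentalGroupoid FundamentalGroupoidFunctor in
/-- Fundamental group of a product. -/
def fgPi {I : Type} {X : I → Type} [∀ i, TopologicalSpace (X i)] (b : ∀ i, X i) :
    FundamentalGroup (∀ i, X i) b ≃* ∀ i, FundamentalGroup (X i) (b i) :=
  letI Xc : I → TopCat := fun i => TopCat.of (X i)
  letI eqv : (∀ i, (πₓ (Xc i) : Type)) ≌ (πₓ (TopCat.of (∀ i, (Xc i : Type))) : Type) :=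
    CategoryTheory.Equivalence.mk (piToPiTop Xc) (CategoryTheory.Functor.pi' (proj Xc))
      (eqToIso (piIso Xc).hom_inv_id.symm) (eqToIso (piIso Xc).inv_hom_id)
  letI y : ∀ i, (πₓ (Xc i) : Type) := fun i => ⟨b i⟩
  ((eqv.fullyFaithfulFunctor.mulEquivEnd y).symm.trans
    (autPiMulEquiv _))



/-- A strong deformation retract of `Y` onto a subset `B` gives a homotopy equivalence
whose forward map is the inclusion. -/
def heOfRetract {T : Type*} [TopologicalSpace T] (B Y : Set T) (hBY : B ⊆ Y)
    (r : T → T) (hr : Continuous r) (hrY : ∀ y ∈ Y, r y ∈ B) (hrB : ∀ b ∈ B, r b = b)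
    (H : unitInterval → T → T) (hH : Continuous (fun q : unitInterval × T => H q.1 q.2))
    (hH0 : ∀ y, H 0 y = y) (hH1 : ∀ y, H 1 y = r y) (hHY : ∀ t, ∀ y ∈ Y, H t y ∈ Y) :
    ContinuousMap.HomotopyEquiv B Y where
  toFun := ⟨Set.inclusion hBY, continuous_inclusion hBY⟩
  invFun := ⟨fun y => ⟨r y.1, hrY y.1 y.2⟩, by
    exact Continuous.subtype_mk (hr.comp continuous_subtype_val) _⟩
  left_inv := by
    have : ContinuousMap.comp ⟨fun y => ⟨r y.1, hrY y.1 y.2⟩, by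
        exact Continuous.subtype_mk (hr.comp continuous_subtype_val) _⟩
        ⟨Set.inclusion hBY, continuous_inclusion hBY⟩ = ContinuousMap.id B := by
      ext b
      exact congrArg Subtype.val (Subtype.ext (hrB b.1 b.2))
    rw [this]
  right_inv := ⟨ContinuousMap.Homotopy.symm
    { toFun := fun q => ⟨H q.1 q.2.1, hHY q.1 q.2.1 q.2.2⟩
      continuous_toFun := by
        apply Continuous.subtype_mk
        exact hH.comp (continuous_fst.prodMk (continuous_subtype_val.comp continuous_snd))
      map_zero_left := fun y => by
        simp only [ContinuousMap.id_apply]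
        exact Subtype.ext (hH0 y.1)
      map_one_left := fun y => by
        exact Subtype.ext (hH1 y.1) }⟩
end General

noncomputable section Stmt11Aux

namespace Stmt11

variable {n p : ℕ} (A : Fin p → (Fin (n + 1) → ℂ))

/-- `i ~_l j`. -/
def rel (l : ℕ) (i j : Fin (n + 1)) : Prop := ∀ k : Fin p, l ≤ (k : ℕ) + 1 → A k i = A k j

lemma rel_refl (l : ℕ) (i : Fin (n + 1)) : rel A l i i := fun _ _ => rfl

lemma rel_symm {l i j} (h : rel A l i j) : rel A l j i := fun k hk => (h k hk).symm

lemma rel_trans {l i j m} (h : rel A l i j) (h' : rel A l j m) : rel A l i m :=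
  fun k hk => (h k hk).trans (h' k hk)

lemma rel_mono {l l' i j} (hl : l ≤ l') (h : rel A l i j) : rel A l' i j :=
  fun k hk => h k (le_trans hl hk)

/-- The `~_l`-class of `i`. -/
def cls0 (l : ℕ) (i : Fin (n + 1)) : Set (Fin (n + 1)) :=
  {j | ∀ k : Fin p, l ≤ (k : ℕ) + 1 → A k i = A k j}

lemma mem_cls0 {l i j} : j ∈ cls0 A l i ↔ rel A l i j := Iff.rfl

lemma self_mem_cls0 (l : ℕ) (i : Fin (n + 1)) : i ∈ cls0 A l i := rel_refl A l i

lemma cls0_eq {l i j} (h : rel A l i j) : cls0 A l i = cls0 A l j :=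
  Set.ext fun _ => ⟨fun hm => rel_trans A (rel_symm A h) hm, fun hm => rel_trans A h hm⟩

lemma cls0_subset {l l' : ℕ} (hl : l ≤ l') (i : Fin (n + 1)) : cls0 A l i ⊆ cls0 A l' i :=
  fun _ hj => rel_mono A hl hj

/-- The set of `~_l`-classes. -/
def classes0 (l : ℕ) : Set (Set (Fin (n + 1))) := {S | ∃ i, S = cls0 A l i}

def kc0 (l : ℕ) (C : Set (Fin (n + 1))) : ℕ := {S | S ∈ classes0 A l ∧ S ⊆ C}.ncard

lemma nonempty_of_mem_classes0 {l C} (hC : C ∈ classes0 A l) : C.Nonempty := by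
  obtain ⟨i, rfl⟩ := hC; exact ⟨i, self_mem_cls0 A l i⟩

lemma rel_of_mem_of_mem {l C} (hC : C ∈ classes0 A l) {i j} (hi : i ∈ C) (hj : j ∈ C) :
    rel A l i j := by
  obtain ⟨i₀, rfl⟩ := hC
  exact rel_trans A (rel_symm A hi) hj

lemma cls0_eq_of_mem {l C} (hC : C ∈ classes0 A l) {i} (hi : i ∈ C) : cls0 A l i = C := by
  obtain ⟨i₀, rfl⟩ := hC
  exact (cls0_eq A hi).symm

/-- The index type: pairs (level, class of `~_{l+1}`). -/
def Idx : Type :=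
  {lC : ℕ × Set (Fin (n + 1)) // 1 ≤ lC.1 ∧ lC.1 ≤ p ∧ lC.2 ∈ classes0 A (lC.1 + 1)}

/-- The classes of `~_l` contained in a class `C` of `~_{l+1}`. -/
def Z (x : Idx A) : Set (Set (Fin (n + 1))) :=
  {S | S ∈ classes0 A x.1.1 ∧ S ⊆ x.1.2}

/-- An enumeration of the classes in `Z x`. -/
def ezx (x : Idx A) : Fin (kc0 A x.1.1 x.1.2) ≃ ↥(Z A x) :=
  (Finite.equivFinOfCardEq (by rw [Nat.card_coe_set_eq]; rfl)).symm

open Classical in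
/-- A representative of a (nonempty) set. -/
def rep (S : Set (Fin (n + 1))) : Fin (n + 1) :=
  if h : S.Nonempty then h.choose else ⟨0, Nat.succ_pos n⟩

lemma rep_mem {S : Set (Fin (n + 1))} (h : S.Nonempty) : rep S ∈ S := by
  rw [rep, dif_pos h]; exact h.choose_spec

/-- The level of `x` as an element of `Fin p`. -/
def kx (x : Idx A) : Fin p := ⟨x.1.1 - 1, by have h1 := x.2.1; have h2 := x.2.2.1; omega⟩

lemma kx_val (x : Idx A) : (kx A x : ℕ) + 1 = x.1.1 := by
  have h1 := x.2.1; simp only [kx]; omega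

/-- The space `Y₀`: tuples constant on the `~_{k+1}`-classes and separating the
`~_{k+1}`-classes inside each `~_{k+2}`-class. -/
def Y0 : Set (Fin p → Fin (n + 1) → ℂ) :=
  {A' | ∀ (k : Fin p) (i j : Fin (n + 1)),
    (rel A ((k : ℕ) + 1) i j → A' k i = A' k j) ∧
    (rel A ((k : ℕ) + 1 + 1) i j → ¬ rel A ((k : ℕ) + 1) i j → A' k i ≠ A' k j)}

lemma ne_of_not_rel {l i j} (h : ¬ rel A l i j) : i ≠ j := by
  rintro rfl; exact h (rel_refl A l i)

/-- The forward map `Y₀ → ∏ Conf`. -/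
def Ff (A' : ↥(Y0 A)) (x : Idx A) : Conf (kc0 A x.1.1 x.1.2) :=
  ⟨fun m => A'.1 (kx A x) (rep ((ezx A x m : Set (Fin (n + 1))))), by
    intro m m' hmm
    by_contra hne
    set S := ezx A x m with hS
    set S' := ezx A x m' with hS'
    have hSS : (S : Set (Fin (n + 1))) ≠ (S' : Set (Fin (n + 1))) := by
      intro h
      exact hne ((ezx A x).injective (Subtype.ext h))
    have hiS : rep (S : Set (Fin (n + 1))) ∈ (S : Set (Fin (n + 1))) :=
      rep_mem (nonempty_of_mem_classes0 A S.2.1)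
    have hjS : rep (S' : Set (Fin (n + 1))) ∈ (S' : Set (Fin (n + 1))) :=
      rep_mem (nonempty_of_mem_classes0 A S'.2.1)
    set i := rep (S : Set (Fin (n + 1)))
    set j := rep (S' : Set (Fin (n + 1)))
    have hrel1 : ¬ rel A x.1.1 i j := by
      intro h
      apply hSS
      rw [← cls0_eq_of_mem A S.2.1 hiS, ← cls0_eq_of_mem A S'.2.1 hjS]
      exact cls0_eq A h
    have hrel2 : rel A (x.1.1 + 1) i j :=
      rel_of_mem_of_mem A x.2.2.2 (S.2.2 hiS) (S'.2.2 hjS)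
    have hcond := (A'.2 (kx A x) i j).2
    rw [kx_val A x] at hcond
    exact hcond hrel2 hrel1 hmm⟩

lemma continuous_Ff : Continuous (Ff A) := by
  apply continuous_pi
  intro x
  apply Continuous.subtype_mk
  apply continuous_pi
  intro m
  exact (continuous_apply _).comp ((continuous_apply _).comp continuous_subtype_val)

open Classical in
/-- Auxiliary evaluation used to define the inverse map. -/
def w (g : ∀ x : Idx A, Conf (kc0 A x.1.1 x.1.2)) (x : Idx A) (S : Set (Fin (n + 1))) : ℂ :=
  if h : S ∈ Z A x then (g x).1 ((ezx A x).symm ⟨S, h⟩) else 0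

lemma w_mem {g x S} (h : S ∈ Z A x) : w A g x S = (g x).1 ((ezx A x).symm ⟨S, h⟩) :=
  dif_pos h

lemma w_ne {g x S S'} (h : S ∈ Z A x) (h' : S' ∈ Z A x) (hne : S ≠ S') :
    w A g x S ≠ w A g x S' := by
  rw [w_mem A h, w_mem A h']
  intro hc
  exact hne (congrArg Subtype.val ((ezx A x).symm.injective ((g x).2 hc)))

/-- The index `xOf k i`: level `k+1` with the `~_{k+2}`-class of `i`. -/
def xOf (k : Fin p) (i : Fin (n + 1)) : Idx A :=
  ⟨((k : ℕ) + 1, cls0 A ((k : ℕ) + 1 + 1) i), le_add_self, by omega, ⟨i, rfl⟩⟩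

lemma mem_Z_xOf (k : Fin p) (i : Fin (n + 1)) : cls0 A ((k : ℕ) + 1) i ∈ Z A (xOf A k i) :=
  ⟨⟨i, rfl⟩, cls0_subset A (by omega) i⟩

/-- The inverse map `∏ Conf → Y₀`. -/
def Gf (g : ∀ x : Idx A, Conf (kc0 A x.1.1 x.1.2)) : Fin p → Fin (n + 1) → ℂ :=
  fun k i => w A g (xOf A k i) (cls0 A ((k : ℕ) + 1) i)

lemma xOf_congr {k : Fin p} {i j : Fin (n + 1)} (h : rel A ((k : ℕ) + 1 + 1) i j) : xOf A k i = xOf A k j := by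
  apply Subtype.ext
  exact congrArg (fun s => ((k : ℕ) + 1, s)) (cls0_eq A h)

lemma Gf_mem (g : ∀ x : Idx A, Conf (kc0 A x.1.1 x.1.2)) : Gf A g ∈ Y0 A := by
  intro k i j
  constructor
  · intro h
    show w A g _ _ = w A g _ _
    rw [xOf_congr A (rel_mono A (by omega) h), cls0_eq A h]
  · intro h2 h1
    show w A g _ _ ≠ w A g _ _
    rw [xOf_congr A h2]
    apply w_ne A (by rw [← xOf_congr A h2]; exact mem_Z_xOf A k i) (mem_Z_xOf A k j)
    intro hc
    apply h1
    show j ∈ cls0 A ((k : ℕ) + 1) i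
    rw [hc]
    exact self_mem_cls0 A _ j

lemma continuous_Gf_val :
    Continuous fun g : ∀ x : Idx A, Conf (kc0 A x.1.1 x.1.2) => Gf A g := by
  apply continuous_pi
  intro k
  apply continuous_pi
  intro i
  show Continuous fun g => w A g (xOf A k i) (cls0 A ((k : ℕ) + 1) i)
  have hmem := mem_Z_xOf A k i
  simp only [w, dif_pos hmem]
  exact (continuous_apply _).comp ((continuous_subtype_val).comp (continuous_apply _))

lemma kx_xOf (k : Fin p) (i : Fin (n + 1)) : kx A (xOf A k i) = k :=
  Fin.ext (by simp [kx, xOf])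

lemma Gf_Ff (A' : ↥(Y0 A)) : Gf A (Ff A A') = A'.1 := by
  funext k i
  show w A (Ff A A') (xOf A k i) (cls0 A ((k : ℕ) + 1) i) = A'.1 k i
  rw [w_mem A (mem_Z_xOf A k i)]
  show A'.1 (kx A (xOf A k i))
      (rep ((ezx A (xOf A k i) ((ezx A (xOf A k i)).symm ⟨_, _⟩) : Set (Fin (n + 1))))) = _
  rw [Equiv.apply_symm_apply, kx_xOf]
  have hrep : rep (cls0 A ((k : ℕ) + 1) i) ∈ cls0 A ((k : ℕ) + 1) i :=
    rep_mem ⟨i, self_mem_cls0 A _ i⟩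
  exact ((A'.2 k i (rep (cls0 A ((k : ℕ) + 1) i))).1 hrep).symm

lemma Ff_Gf (g : ∀ x : Idx A, Conf (kc0 A x.1.1 x.1.2)) :
    Ff A ⟨Gf A g, Gf_mem A g⟩ = g := by
  funext x
  apply Subtype.ext
  funext m
  show Gf A g (kx A x) (rep ((ezx A x m : Set (Fin (n + 1))))) = (g x).1 m
  set S : ↥(Z A x) := ezx A x m with hSdef
  have hk := kx_val A x
  have hrep : rep (S : Set (Fin (n + 1))) ∈ (S : Set (Fin (n + 1))) :=
    rep_mem (nonempty_of_mem_classes0 A S.2.1)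
  have hcls : cls0 A ((kx A x : ℕ) + 1) (rep (S : Set (Fin (n + 1)))) = S := by
    rw [hk]
    exact cls0_eq_of_mem A S.2.1 hrep
  have hxOf : xOf A (kx A x) (rep (S : Set (Fin (n + 1)))) = x := by
    apply Subtype.ext
    have h2 : cls0 A ((kx A x : ℕ) + 1 + 1) (rep (S : Set (Fin (n + 1)))) = x.1.2 := by
      rw [hk]
      exact cls0_eq_of_mem A x.2.2.2 (S.2.2 hrep)
    calc ((kx A x : ℕ) + 1, cls0 A ((kx A x : ℕ) + 1 + 1) (rep (S : Set (Fin (n + 1)))))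
        = (x.1.1, x.1.2) := by rw [h2, hk]
      _ = x.1 := rfl
  show w A g (xOf A (kx A x) (rep (S : Set (Fin (n + 1)))))
      (cls0 A ((kx A x : ℕ) + 1) (rep (S : Set (Fin (n + 1))))) = (g x).1 m
  rw [hxOf, hcls]
  rw [w_mem A S.2]
  congr 1
  rw [show (⟨(S : Set (Fin (n + 1))), S.2⟩ : ↥(Z A x)) = S from Subtype.ext rfl]
  rw [hSdef, Equiv.symm_apply_apply]

/-- The homeomorphism `Y₀ ≃ₜ ∏ Conf`. -/
def homeoY : ↥(Y0 A) ≃ₜ ∀ x : Idx A, Conf (kc0 A x.1.1 x.1.2) where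
  toFun := Ff A
  invFun g := ⟨Gf A g, Gf_mem A g⟩
  left_inv A' := Subtype.ext (Gf_Ff A A')
  right_inv g := Ff_Gf A g
  continuous_toFun := continuous_Ff A
  continuous_invFun := Continuous.subtype_mk (continuous_Gf_val A) _

/-- The trace-free part of `B_Q`. -/
def B0 : Set (Fin p → Fin (n + 1) → ℂ) :=
  {A' | (∀ k, ∑ i, A' k i = 0) ∧ A' ∈ Y0 A}

lemma B0_subset_Y0 : B0 A ⊆ Y0 A := fun _ h => h.2

lemma Y0_shift {A'} (h : A' ∈ Y0 A) (c : Fin p → ℂ) :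
    (fun k i => A' k i - c k) ∈ Y0 A := by
  intro k i j
  refine ⟨fun hr => by simp only []; rw [(h k i j).1 hr], fun h2 h1 hc => (h k i j).2 h2 h1 ?_⟩
  simp only [] at hc
  linear_combination hc

/-- The retraction `T → T` making every coefficient trace-free. -/
def rmap : (Fin p → Fin (n + 1) → ℂ) → (Fin p → Fin (n + 1) → ℂ) :=
  fun A' k i => A' k i - (∑ j, A' k j) / (n + 1)

lemma sum_rmap (A' : Fin p → Fin (n + 1) → ℂ) (k : Fin p) : ∑ i, rmap A' k i = 0 := by
  have hcard : (Finset.univ : Finset (Fin (n + 1))).card = n + 1 := by simp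
  have hne : ((n : ℂ) + 1) ≠ 0 := Nat.cast_add_one_ne_zero n
  simp only [rmap, Finset.sum_sub_distrib, Finset.sum_const, hcard, nsmul_eq_mul]
  push_cast
  field_simp
  ring

lemma rmap_mem {A'} (h : A' ∈ Y0 A) : rmap A' ∈ B0 A :=
  ⟨sum_rmap A', Y0_shift A h _⟩

lemma rmap_eq_of_mem {A'} (h : A' ∈ B0 A) : rmap A' = A' := by
  funext k i
  simp [rmap, h.1 k]

/-- The straight-line homotopy from the identity to `rmap`. -/
def Hmap : unitInterval → (Fin p → Fin (n + 1) → ℂ) → (Fin p → Fin (n + 1) → ℂ) :=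
  fun t A' k i => A' k i - ((t : ℝ) : ℂ) * ((∑ j, A' k j) / (n + 1))

lemma Hmap_zero (A' : Fin p → Fin (n + 1) → ℂ) : Hmap (0 : unitInterval) A' = A' := by
  funext k i
  simp [Hmap]

lemma Hmap_one (A' : Fin p → Fin (n + 1) → ℂ) : Hmap (1 : unitInterval) A' = rmap A' := by
  funext k i
  simp [Hmap, rmap]

lemma Hmap_mem (t : unitInterval) {A'} (h : A' ∈ Y0 A) : Hmap t A' ∈ Y0 A :=
  Y0_shift A h _

lemma continuous_Hmap :
    Continuous fun q : unitInterval × (Fin p → Fin (n + 1) → ℂ) => Hmap q.1 q.2 := by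
  apply continuous_pi
  intro k
  apply continuous_pi
  intro i
  apply Continuous.sub
  · exact (continuous_apply i).comp ((continuous_apply k).comp continuous_snd)
  · apply Continuous.mul
    · exact Complex.continuous_ofReal.comp (continuous_subtype_val.comp continuous_fst)
    · apply Continuous.div_const
      apply continuous_finset_sum
      intro j _
      exact (continuous_apply j).comp ((continuous_apply k).comp continuous_snd)

lemma continuous_rmap : Continuous (rmap : (Fin p → Fin (n + 1) → ℂ) → _) := by
  apply continuous_pi
  intro k
  apply continuous_pi
  intro i
  apply Continuous.sub
  · exact (continuous_apply i).comp (continuous_apply k)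
  · apply Continuous.div_const
    apply continuous_finset_sum
    intro j _
    exact (continuous_apply j).comp (continuous_apply k)

/-- The homotopy equivalence from `B₀` to `Y₀`. -/
def heB0Y0 : ContinuousMap.HomotopyEquiv ↥(B0 A) ↥(Y0 A) :=
  heOfRetract (B0 A) (Y0 A) (B0_subset_Y0 A) rmap continuous_rmap
    (fun _ hy => rmap_mem A hy) (fun _ hb => rmap_eq_of_mem A hb) Hmap continuous_Hmap
    Hmap_zero Hmap_one (fun t _ hy => Hmap_mem A t hy)

/-- Master computation: the fundamental group of `B₀`. -/
def masterEquiv (hA : A ∈ B0 A) :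
    FundamentalGroup ↥(B0 A) ⟨A, hA⟩ ≃*
      ∀ x : Idx A, FundamentalGroup (Conf (kc0 A x.1.1 x.1.2))
        ((homeoY A) ((heB0Y0 A).toFun ⟨A, hA⟩) x) :=
  ((fgOfHE (heB0Y0 A) ⟨A, hA⟩).trans
    (fgOfHE (homeoY A).toHomotopyEquiv ((heB0Y0 A).toFun ⟨A, hA⟩))).trans
    (fgPi _)

end Stmt11

end Stmt11Aux


/-- Type-A structure theorem: the fundamental group of the universal deformation space `B_Q`
of a type-`A_n` irregular type is the product, over the levels `l ∈ {1,…,p}` and the classes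
`C` of `~_{l+1}`, of the pure braid groups on `k_{l,C}` strands, where `k_{l,C}` is the number
of `~_l`-classes contained in `C`. The `k`-th entry of a tuple `A' : Fin p → t` represents
the coefficient `A'_{k+1}`. -/
theorem stmt11 (n p : ℕ) (hn : 1 ≤ n) (hp : 1 ≤ p)
    (A : Fin p → (Fin (n + 1) → ℂ)) (hAt : ∀ k, ∑ i, A k i = 0)
    -- `d i j` is the largest level (in `{1,…,p}`) where the `i`-th and `j`-th coordinates of
    -- the coefficients differ (`0` if they always agree), i.e. the pole order of `α_{ij} ∘ Q`:
    (d : Fin (n + 1) → Fin (n + 1) → ℕ)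
    (hd : ∀ i j, i ≠ j → d i j ≤ p ∧
      (∀ k : Fin p, d i j < (k : ℕ) + 1 → A k i = A k j) ∧
      (1 ≤ d i j → ∃ k : Fin p, (k : ℕ) + 1 = d i j ∧ A k i ≠ A k j))
    (BQ : Set (Fin p → (Fin (n + 1) → ℂ)))
    (hBQ : BQ = {A' | (∀ k, ∑ i, A' k i = 0) ∧ ∀ i j, i ≠ j →
      (∀ k : Fin p, d i j < (k : ℕ) + 1 → A' k i = A' k j) ∧
      ∀ k : Fin p, (k : ℕ) + 1 = d i j → A' k i ≠ A' k j})
    -- the `~_l`-class of `i`: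
    (cls : ℕ → Fin (n + 1) → Set (Fin (n + 1)))
    (hcls : ∀ l i, cls l i = {j | ∀ k : Fin p, l ≤ (k : ℕ) + 1 → A k i = A k j})
    (classes : ℕ → Set (Set (Fin (n + 1))))
    (hclasses : ∀ l, classes l = {S | ∃ i, S = cls l i})
    -- the number of `~_l`-classes contained in a set `C`:
    (kc : ℕ → Set (Fin (n + 1)) → ℕ)
    (hkc : ∀ l C, kc l C = {S ∈ classes l | S ⊆ C}.ncard) :
    ∃ (hA : A ∈ BQ)
      (c : ∀ x : {lC : ℕ × Set (Fin (n + 1)) //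
          1 ≤ lC.1 ∧ lC.1 ≤ p ∧ lC.2 ∈ classes (lC.1 + 1)}, Conf (kc x.1.1 x.1.2)),
      Nonempty (FundamentalGroup BQ ⟨A, hA⟩ ≃*
        (∀ x : {lC : ℕ × Set (Fin (n + 1)) //
            1 ≤ lC.1 ∧ lC.1 ≤ p ∧ lC.2 ∈ classes (lC.1 + 1)},
          FundamentalGroup (Conf (kc x.1.1 x.1.2)) (c x))) := by
  subst hBQ
  obtain rfl : cls = fun l i => {j | ∀ k : Fin p, l ≤ (k : ℕ) + 1 → A k i = A k j} :=
    funext fun l => funext fun i => hcls l i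
  obtain rfl : classes = fun l => {S | ∃ i, S = (fun l i =>
      {j | ∀ k : Fin p, l ≤ (k : ℕ) + 1 → A k i = A k j}) l i} :=
    funext fun l => hclasses l
  obtain rfl : kc = fun l C => {S ∈ (fun l => {S | ∃ i, S = (fun l i =>
      {j | ∀ k : Fin p, l ≤ (k : ℕ) + 1 → A k i = A k j}) l i}) l | S ⊆ C}.ncard :=
    funext fun l => funext fun C => hkc l C
  have L1 : ∀ i j, i ≠ j → ∀ l, 1 ≤ l → (d i j < l ↔ Stmt11.rel A l i j) := by
    intro i j hne l hl
    obtain ⟨hdp, hagree, hlast⟩ := hd i j hne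
    constructor
    · intro hdl k hk
      exact hagree k (by omega)
    · intro hr
      by_contra hld
      push_neg at hld
      obtain ⟨k, hk1, hk2⟩ := hlast (by omega)
      exact hk2 (hr k (by omega))
  have hset : {A' : Fin p → (Fin (n + 1) → ℂ) | (∀ k, ∑ i, A' k i = 0) ∧ ∀ i j, i ≠ j →
      (∀ k : Fin p, d i j < (k : ℕ) + 1 → A' k i = A' k j) ∧
      ∀ k : Fin p, (k : ℕ) + 1 = d i j → A' k i ≠ A' k j} = Stmt11.B0 A := by
    ext A'
    constructor
    · rintro ⟨hsum, hcond⟩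
      refine ⟨hsum, fun k i j => ⟨fun hr => ?_, fun h2 h1 => ?_⟩⟩
      · by_cases hij : i = j
        · rw [hij]
        · exact (hcond i j hij).1 k ((L1 i j hij ((k : ℕ) + 1) (by omega)).mpr hr)
      · have hij : i ≠ j := Stmt11.ne_of_not_rel A h1
        apply (hcond i j hij).2 k
        have hlt : d i j < (k : ℕ) + 1 + 1 := (L1 i j hij _ (by omega)).mpr h2
        have hge : ¬ d i j < (k : ℕ) + 1 := fun hc => h1 ((L1 i j hij _ (by omega)).mp hc)
        omega
    · rintro ⟨hsum, hY⟩
      refine ⟨hsum, fun i j hij => ⟨fun k hdk => ?_, fun k hkd => ?_⟩⟩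
      · exact (hY k i j).1 ((L1 i j hij _ (by omega)).mp hdk)
      · exact (hY k i j).2 ((L1 i j hij _ (by omega)).mp (by omega))
          (fun hr => by have := (L1 i j hij _ (by omega)).mpr hr; omega)
  rw [hset]
  have hA : A ∈ Stmt11.B0 A := by
    refine ⟨hAt, fun k i j => ⟨fun hr => hr k (le_refl _), fun h2 h1 hc => ?_⟩⟩
    apply h1
    intro k' hk'
    by_cases hkk : (k : ℕ) = (k' : ℕ)
    · rwa [← Fin.ext hkk]
    · exact h2 k' (by omega)
  exact ⟨hA, _, ⟨Stmt11.masterEquiv A hA⟩⟩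
end

section
/- Let A ∈ ℂ^n satisfy A_i ≠ −A_j whenever i ≠ j and A_i, A_j are both nonzero. Set Φ_h := {α ∈ Φ_{D_n} : α(A) = 0}, K := {i : A_i = 0}, m := |K|, let J be the set of level sets of A restricted to {i : A_i ≠ 0} (classes of 'i ~ j iff A_i = A_j ≠ 0'), let r be the number of classes I ∈ J with at least two elements, and (when m ≤ 1) set s := (|J| − r) + m. Then: (i) if m ≥ 2, the fundamental group π₁(B(Φ_h, Φ_{D_n}), A) is isomorphic to the type-B/C pure braid group PB^{BC}_{|J|}; and (ii) if m ≤ 1, π₁(B(Φ_h, Φ_{D_n}), A) is isomorphic to π₁(X_{r,s}), the pure braid group of the exotic hyperplane arrangement of type (B_r/C_r)D_s. -/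
/-- The coordinate functional `α_i : ℂ^n → ℂ`. -/
noncomputable def prj (n : ℕ) (i : Fin n) : (Fin n → ℂ) →ₗ[ℂ] ℂ :=
  LinearMap.proj i

/-- The type-`B_k/C_k` root-hyperplane complement; its fundamental group is the type-B/C
pure braid group `PB^{BC}_k`. -/
abbrev XBC (k : ℕ) : Type :=
  {z : Fin k → ℂ // (∀ i, z i ≠ 0) ∧ ∀ i j, i ≠ j → z i ≠ z j ∧ z i ≠ -z j}

/-- The exotic hyperplane complement `X_{r,s}` of type `(B_r/C_r)D_s`. -/
abbrev Xrs (r s : ℕ) : Type :=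
  {zw : (Fin r → ℂ) × (Fin s → ℂ) //
    (∀ i, zw.1 i ≠ 0) ∧ (∀ i j, i ≠ j → zw.1 i ≠ zw.1 j ∧ zw.1 i ≠ -zw.1 j) ∧
    (∀ i k, zw.1 i ≠ zw.2 k ∧ zw.1 i ≠ -zw.2 k) ∧
    ∀ k l, k ≠ l → zw.2 k ≠ zw.2 l ∧ zw.2 k ≠ -zw.2 l}

open CategoryTheory


noncomputable def fgHomeo {X Y : Type} [TopologicalSpace X] [TopologicalSpace Y]
    (h : X ≃ₜ Y) (x : X) : FundamentalGroup X x ≃* FundamentalGroup Y (h x) := by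
  let e := FundamentalGroupoidFunctor.equivOfHomotopyEquiv
    (X := TopCat.of X) (Y := TopCat.of Y) h.toHomotopyEquiv
  let f := e.fullyFaithfulFunctor.mulEquivEnd
      (FundamentalGroupoid.mk x : FundamentalGroupoid (TopCat.of X))
  exact f

/-- The pairwise conditions cutting out `B(Φ_h, Φ_{D_n})`. -/
def Pp {n : ℕ} (A x : Fin n → ℂ) : Prop :=
  ∀ i j : Fin n, i ≠ j →
    (A i = A j → x i = x j) ∧ (A i = -A j → x i = -x j) ∧
    (A i ≠ A j → x i ≠ x j) ∧ (A i + A j ≠ 0 → x i + x j ≠ 0)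

lemma pp_self {n : ℕ} (A : Fin n → ℂ) : Pp A A :=
  fun _ _ _ => ⟨id, id, id, id⟩

section Classes
variable {n : ℕ} (A : Fin n → ℂ)

def Jset : Set (Set (Fin n)) := {S | ∃ i, A i ≠ 0 ∧ S = {j | A j = A i}}

noncomputable def rep (S : ↥(Jset A)) : Fin n := S.2.choose

lemma rep_ne (S : ↥(Jset A)) : A (rep A S) ≠ 0 := S.2.choose_spec.1

lemma rep_set (S : ↥(Jset A)) : (S : Set (Fin n)) = {j | A j = A (rep A S)} :=
  S.2.choose_spec.2

lemma mem_S_iff (S : ↥(Jset A)) (j : Fin n) :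
    j ∈ (S : Set (Fin n)) ↔ A j = A (rep A S) := by
  conv_lhs => rw [rep_set]
  rfl

lemma rep_mem (S : ↥(Jset A)) : rep A S ∈ (S : Set (Fin n)) := (mem_S_iff A S _).2 rfl

def cls (i : Fin n) (hi : A i ≠ 0) : ↥(Jset A) := ⟨{j | A j = A i}, i, hi, rfl⟩

lemma mem_cls (i : Fin n) (hi : A i ≠ 0) : i ∈ ((cls A i hi : Set (Fin n))) := rfl

lemma A_rep_cls (i : Fin n) (hi : A i ≠ 0) : A (rep A (cls A i hi)) = A i :=
  rep_mem A (cls A i hi)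

lemma cls_rep (S : ↥(Jset A)) : cls A (rep A S) (rep_ne A S) = S :=
  Subtype.ext (rep_set A S).symm

lemma cls_eq_iff {i j : Fin n} (hi : A i ≠ 0) (hj : A j ≠ 0) :
    cls A i hi = cls A j hj ↔ A i = A j := by
  constructor
  · intro h
    have : i ∈ ((cls A j hj : Set (Fin n))) := by rw [← h]; exact mem_cls A i hi
    exact this
  · intro h
    exact Subtype.ext (by ext k; simp only [cls, Set.mem_setOf_eq, h])

variable {A}

lemma rep_A_ne {S T : ↥(Jset A)} (hST : S ≠ T) : A (rep A S) ≠ A (rep A T) := by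
  intro h
  apply hST
  rw [← cls_rep A S, ← cls_rep A T]
  exact (cls_eq_iff A (rep_ne A S) (rep_ne A T)).2 h

lemma rep_ne_rep {S T : ↥(Jset A)} (hST : S ≠ T) : rep A S ≠ rep A T :=
  fun h => rep_A_ne hST (by rw [h])

end Classes

noncomputable def enumSet {α : Type*} [Finite α] (s : Set α) : ↥s ≃ Fin s.ncard :=
  Finite.equivFinOfCardEq (Nat.card_coe_set_eq s)

lemma nadd {a b : ℂ} : a + b ≠ 0 ↔ a ≠ -b := not_congr eq_neg_iff_add_eq_zero.symm

lemma two_mul_ne {a : ℂ} (h : a ≠ 0) : a + a ≠ 0 := by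
  intro hc
  exact h (by linear_combination hc / 2)


section Case1
variable {n k : ℕ} {A : Fin n → ℂ}

lemma zero_coord {x : Fin n → ℂ} (hP : Pp A x) (h2 : 2 ≤ {i | A i = 0}.ncard)
    {i : Fin n} (hi : A i = 0) : x i = 0 := by
  obtain ⟨j, hj, hji⟩ :=
    Set.exists_ne_of_one_lt_ncard (s := {i | A i = 0}) (by omega) i
  have hj' : A j = 0 := hj
  have hij : i ≠ j := hji.symm
  have h1 : x i = x j := (hP i j hij).1 (by rw [hi, hj'])
  have h2' : x i = -x j := (hP i j hij).2.1 (by rw [hi, hj']; simp)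
  rw [h1] at h2'
  rw [h1]
  linear_combination h2' / 2

lemma nonzero_coord {x : Fin n → ℂ} (hP : Pp A x) (h2 : 2 ≤ {i | A i = 0}.ncard)
    {i : Fin n} (hi : A i ≠ 0) : x i ≠ 0 := by
  obtain ⟨j, hj, hji⟩ :=
    Set.exists_ne_of_one_lt_ncard (s := {i | A i = 0}) (by omega) i
  have hj' : A j = 0 := hj
  have hij : i ≠ j := hji.symm
  have h3 : x i ≠ x j := (hP i j hij).2.2.1 (by rw [hj']; exact hi)
  rwa [zero_coord hP h2 hj'] at h3

variable (A) in
noncomputable def Gfun1 (e : ↥(Jset A) ≃ Fin k) (z : Fin k → ℂ) : Fin n → ℂ :=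
  fun i => @dite _ (A i = 0) (Classical.dec _) (fun _ => 0) (fun h => z (e (cls A i h)))

lemma Gfun1_zero (e : ↥(Jset A) ≃ Fin k) (z : Fin k → ℂ) {i : Fin n} (hi : A i = 0) :
    Gfun1 A e z i = 0 := dif_pos hi

lemma Gfun1_ne (e : ↥(Jset A) ≃ Fin k) (z : Fin k → ℂ) {i : Fin n} (hi : A i ≠ 0) :
    Gfun1 A e z i = z (e (cls A i hi)) := dif_neg hi

variable (A) in
noncomputable def homeo1 (hA : ∀ i j, i ≠ j → A i ≠ 0 → A j ≠ 0 → A i ≠ -A j)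
    (h2 : 2 ≤ {i | A i = 0}.ncard) (e : ↥(Jset A) ≃ Fin k) :
    {x : Fin n → ℂ // Pp A x} ≃ₜ XBC k where
  toFun x := ⟨fun t => x.1 (rep A (e.symm t)), by
    refine ⟨fun t => nonzero_coord x.2 h2 (rep_ne A _), fun t t' htt => ?_⟩
    have hST : e.symm t ≠ e.symm t' := fun h => htt (by simpa using congrArg e h)
    have hAr : A (rep A (e.symm t)) ≠ A (rep A (e.symm t')) := rep_A_ne hST
    have hrr : rep A (e.symm t) ≠ rep A (e.symm t') := rep_ne_rep hST
    refine ⟨(x.2 _ _ hrr).2.2.1 hAr, ?_⟩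
    rw [← nadd]
    exact (x.2 _ _ hrr).2.2.2 (nadd.2 (hA _ _ hrr (rep_ne A _) (rep_ne A _)))⟩
  invFun z := ⟨Gfun1 A e z.1, by
    intro i j hij
    by_cases hi : A i = 0 <;> by_cases hj : A j = 0
    · rw [Gfun1_zero e z.1 hi, Gfun1_zero e z.1 hj]
      exact ⟨fun _ => rfl, fun _ => by simp, fun h => absurd (hi.trans hj.symm) h,
        fun h => absurd (by rw [hi, hj, add_zero]) h⟩
    · rw [Gfun1_zero e z.1 hi, Gfun1_ne e z.1 hj]
      exact ⟨fun h => absurd (h ▸ hi) hj,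
        fun h => absurd (by rw [hi] at h; exact neg_eq_zero.mp h.symm) hj,
        fun _ => (z.2.1 _).symm, fun _ => by simpa using z.2.1 _⟩
    · rw [Gfun1_ne e z.1 hi, Gfun1_zero e z.1 hj]
      exact ⟨fun h => absurd (h ▸ hj)  hi, fun h => absurd (by rw [h, hj]; ring) hi,
        fun _ => z.2.1 _, fun _ => by simpa using z.2.1 _⟩
    · by_cases hAij : A i = A j
      · have hc : cls A i hi = cls A j hj := (cls_eq_iff A hi hj).2 hAij
        rw [Gfun1_ne e z.1 hi, Gfun1_ne e z.1 hj, hc]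
        exact ⟨fun _ => rfl, fun h => absurd h (hA i j hij hi hj),
          fun h => absurd hAij h, fun _ => two_mul_ne (z.2.1 _)⟩
      · have hc : cls A i hi ≠ cls A j hj := fun h => hAij ((cls_eq_iff A hi hj).1 h)
        have hne : e (cls A i hi) ≠ e (cls A j hj) := fun h => hc (by simpa using h)
        rw [Gfun1_ne e z.1 hi, Gfun1_ne e z.1 hj]
        exact ⟨fun h => absurd h hAij, fun h => absurd h (hA i j hij hi hj),
          fun _ => (z.2.2 _ _ hne).1, fun _ => nadd.2 (z.2.2 _ _ hne).2⟩⟩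
  left_inv x := by
    apply Subtype.ext
    funext i
    show Gfun1 A e (fun t => x.1 (rep A (e.symm t))) i = x.1 i
    by_cases hi : A i = 0
    · rw [Gfun1_zero _ _ hi, zero_coord x.2 h2 hi]
    · rw [Gfun1_ne _ _ hi]
      show x.1 (rep A (e.symm (e (cls A i hi)))) = x.1 i
      rw [Equiv.symm_apply_apply]
      by_cases h : rep A (cls A i hi) = i
      · rw [h]
      · exact (x.2 _ _ h).1 (A_rep_cls A i hi)
  right_inv z := by
    apply Subtype.ext
    funext t
    show Gfun1 A e z.1 (rep A (e.symm t)) = z.1 t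
    rw [Gfun1_ne e z.1 (rep_ne A (e.symm t))]
    have : cls A (rep A (e.symm t)) (rep_ne A (e.symm t)) = e.symm t := cls_rep A _
    rw [this, Equiv.apply_symm_apply]
  continuous_toFun := by
    apply Continuous.subtype_mk
    exact continuous_pi fun t => (continuous_apply _).comp continuous_subtype_val
  continuous_invFun := by
    apply Continuous.subtype_mk
    apply continuous_pi
    intro i
    by_cases hi : A i = 0
    · simp only [Gfun1, dif_pos hi]
      exact continuous_const
    · simp only [Gfun1, dif_neg hi]
      exact (continuous_apply _).comp continuous_subtype_val

end Case1


section Case2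
variable {n R S : ℕ} {A : Fin n → ℂ}

variable (A) in
def Jb : Set (Set (Fin n)) := {T | T ∈ Jset A ∧ 2 ≤ T.ncard}

variable (A) in
def Js : Set (Set (Fin n)) := {T | T ∈ Jset A ∧ ¬ 2 ≤ T.ncard}

variable (A) in
noncomputable def toJb (T : ↥(Jb A)) : ↥(Jset A) := ⟨T.1, T.2.1⟩

variable (A) in
noncomputable def toJs (T : ↥(Js A)) : ↥(Jset A) := ⟨T.1, T.2.1⟩

lemma toJb_inj {T T' : ↥(Jb A)} (h : toJb A T = toJb A T') : T = T' :=
  Subtype.ext (congrArg (Subtype.val : ↥(Jset A) → Set (Fin n)) h)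

lemma toJs_inj {T T' : ↥(Js A)} (h : toJs A T = toJs A T') : T = T' :=
  Subtype.ext (congrArg (Subtype.val : ↥(Jset A) → Set (Fin n)) h)

lemma toJb_ne_toJs (T : ↥(Jb A)) (T' : ↥(Js A)) : toJb A T ≠ toJs A T' := by
  intro h
  have h2 : ((T : Set (Fin n))).ncard = ((T' : Set (Fin n))).ncard :=
    congrArg (fun (U : ↥(Jset A)) => (U : Set (Fin n)).ncard) h
  exact T'.2.2 (h2 ▸ T.2.2)

lemma neg_swap {a b : ℂ} (h : a ≠ -b) : b ≠ -a := fun hc => h (by rw [hc, neg_neg])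

lemma cls_rep' (T : ↥(Jset A)) (h : A (rep A T) ≠ 0) : cls A (rep A T) h = T :=
  Subtype.ext (rep_set A T).symm

lemma x_rep_cls {x : Fin n → ℂ} (hP : Pp A x) (i : Fin n) (hi : A i ≠ 0) :
    x (rep A (cls A i hi)) = x i := by
  by_cases h : rep A (cls A i hi) = i
  · rw [h]
  · exact (hP _ _ h).1 (A_rep_cls A i hi)

lemma reps_pair {x : Fin n → ℂ} (hP : Pp A x)
    (hA : ∀ i j, i ≠ j → A i ≠ 0 → A j ≠ 0 → A i ≠ -A j)
    {T T' : ↥(Jset A)} (h : T ≠ T') :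
    x (rep A T) ≠ x (rep A T') ∧ x (rep A T) ≠ -x (rep A T') := by
  refine ⟨(hP _ _ (rep_ne_rep h)).2.2.1 (rep_A_ne h), ?_⟩
  rw [← nadd]
  exact (hP _ _ (rep_ne_rep h)).2.2.2
    (nadd.2 (hA _ _ (rep_ne_rep h) (rep_ne A _) (rep_ne A _)))

lemma rep_K_pair {x : Fin n → ℂ} (hP : Pp A x) {T : ↥(Jset A)} {k : Fin n}
    (hk : A k = 0) :
    (x (rep A T) ≠ x k ∧ x (rep A T) ≠ -x k) ∧
      x k ≠ x (rep A T) ∧ x k ≠ -x (rep A T) := by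
  have hne : rep A T ≠ k := fun h => rep_ne A T (h ▸ hk)
  have h3 : x (rep A T) ≠ x k := (hP _ _ hne).2.2.1 (fun h => rep_ne A T (h.trans hk))
  have h4 : x (rep A T) + x k ≠ 0 :=
    (hP _ _ hne).2.2.2 (by rw [hk, add_zero]; exact rep_ne A T)
  exact ⟨⟨h3, nadd.1 h4⟩, Ne.symm h3, neg_swap (nadd.1 h4)⟩

lemma small_rep {T : ↥(Jset A)} (hs : ¬ 2 ≤ (T : Set (Fin n)).ncard)
    {j : Fin n} (hj : j ∈ (T : Set (Fin n))) : j = rep A T :=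
  (Set.ncard_le_one (Set.toFinite _)).1 (by omega) j hj _ (rep_mem A T)

lemma big_nonzero {x : Fin n → ℂ} (hP : Pp A x) {T : ↥(Jset A)}
    (hb : 2 ≤ (T : Set (Fin n)).ncard) : x (rep A T) ≠ 0 := by
  obtain ⟨j, hj, hne⟩ :=
    Set.exists_ne_of_one_lt_ncard (s := (T : Set (Fin n))) (by omega) (rep A T)
  have hAj : A j = A (rep A T) := (mem_S_iff A T j).1 hj
  have hxj : x j = x (rep A T) := (hP _ _ hne).1 hAj
  have h4 : x j + x (rep A T) ≠ 0 :=
    (hP _ _ hne).2.2.2 (by rw [hAj]; exact two_mul_ne (rep_ne A T))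
  rw [hxj] at h4
  intro h
  exact h4 (by rw [h, add_zero])

lemma K_unique (h1 : {i : Fin n | A i = 0}.ncard ≤ 1) {i j : Fin n}
    (hi : A i = 0) (hj : A j = 0) : i = j :=
  (Set.ncard_le_one (Set.toFinite _)).1 h1 i hi j hj

variable (A) in
noncomputable def Gfun2 (eR : ↥(Jb A) ≃ Fin R)
    (eS : (↥(Js A) ⊕ ↥({i : Fin n | A i = 0})) ≃ Fin S)
    (zw : (Fin R → ℂ) × (Fin S → ℂ)) : Fin n → ℂ := fun i =>
  @dite _ (A i = 0) (Classical.dec _) (fun h => zw.2 (eS (Sum.inr ⟨i, h⟩)))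
    (fun h =>
      @dite _ (2 ≤ ((cls A i h : Set (Fin n))).ncard) (Classical.dec _)
        (fun hb => zw.1 (eR ⟨(cls A i h : Set (Fin n)), (cls A i h).2, hb⟩))
        (fun hb => zw.2 (eS (Sum.inl ⟨(cls A i h : Set (Fin n)), (cls A i h).2, hb⟩))))

variable (A) in
lemma Gfun2_zero (eR : ↥(Jb A) ≃ Fin R)
    (eS : (↥(Js A) ⊕ ↥({i : Fin n | A i = 0})) ≃ Fin S)
    (zw : (Fin R → ℂ) × (Fin S → ℂ)) {i : Fin n} (hi : A i = 0) :
    Gfun2 A eR eS zw i = zw.2 (eS (Sum.inr ⟨i, hi⟩)) := dif_pos hi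

variable (A) in
lemma Gfun2_big (eR : ↥(Jb A) ≃ Fin R)
    (eS : (↥(Js A) ⊕ ↥({i : Fin n | A i = 0})) ≃ Fin S)
    (zw : (Fin R → ℂ) × (Fin S → ℂ)) {i : Fin n} (hi : A i ≠ 0)
    (hb : 2 ≤ ((cls A i hi : Set (Fin n))).ncard) :
    Gfun2 A eR eS zw i = zw.1 (eR ⟨(cls A i hi : Set (Fin n)), (cls A i hi).2, hb⟩) := by
  rw [Gfun2, dif_neg hi, dif_pos hb]

variable (A) in
lemma Gfun2_small (eR : ↥(Jb A) ≃ Fin R)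
    (eS : (↥(Js A) ⊕ ↥({i : Fin n | A i = 0})) ≃ Fin S)
    (zw : (Fin R → ℂ) × (Fin S → ℂ)) {i : Fin n} (hi : A i ≠ 0)
    (hb : ¬ 2 ≤ ((cls A i hi : Set (Fin n))).ncard) :
    Gfun2 A eR eS zw i = zw.2 (eS (Sum.inl ⟨(cls A i hi : Set (Fin n)), (cls A i hi).2, hb⟩)) := by
  rw [Gfun2, dif_neg hi, dif_neg hb]

end Case2

section Homeo2
variable {n R S : ℕ} {A : Fin n → ℂ}

variable (A) in
noncomputable def Fz2 (eR : ↥(Jb A) ≃ Fin R) (x : Fin n → ℂ) : Fin R → ℂ :=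
  fun t => x (rep A (toJb A (eR.symm t)))

variable (A) in
noncomputable def Fw2 (eS : (↥(Js A) ⊕ ↥({i : Fin n | A i = 0})) ≃ Fin S)
    (x : Fin n → ℂ) : Fin S → ℂ :=
  fun u => Sum.elim (fun Sm => x (rep A (toJs A Sm))) (fun k => x k.1) (eS.symm u)

variable (A) in
noncomputable def homeo2 (hA : ∀ i j, i ≠ j → A i ≠ 0 → A j ≠ 0 → A i ≠ -A j)
    (h1 : {i : Fin n | A i = 0}.ncard ≤ 1)
    (eR : ↥(Jb A) ≃ Fin R) (eS : (↥(Js A) ⊕ ↥({i : Fin n | A i = 0})) ≃ Fin S) :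
    {x : Fin n → ℂ // Pp A x} ≃ₜ Xrs R S where
  toFun x := ⟨(Fz2 A eR x.1, Fw2 A eS x.1), by
    refine ⟨fun t => big_nonzero x.2 (eR.symm t).2.2, fun t t' htt => ?_, fun t u => ?_,
      fun u u' huu => ?_⟩
    · have hT : toJb A (eR.symm t) ≠ toJb A (eR.symm t') := by
        intro h
        exact htt (by simpa using congrArg eR (toJb_inj h))
      exact reps_pair x.2 hA hT
    · show Fz2 A eR x.1 t ≠ Fw2 A eS x.1 u ∧ Fz2 A eR x.1 t ≠ -Fw2 A eS x.1 u
      unfold Fw2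
      rcases hu : eS.symm u with Sm | k
      · simp only [Sum.elim_inl]
        exact reps_pair x.2 hA (toJb_ne_toJs _ _)
      · simp only [Sum.elim_inr]
        exact (rep_K_pair x.2 k.2).1
    · show (Fw2 A eS x.1 u ≠ Fw2 A eS x.1 u' ∧ Fw2 A eS x.1 u ≠ -Fw2 A eS x.1 u')
      have hsy : eS.symm u ≠ eS.symm u' := fun h => huu (by simpa using congrArg eS h)
      unfold Fw2
      rcases hu : eS.symm u with Sm | k <;> rcases hu' : eS.symm u' with Sm' | k'
      · simp only [Sum.elim_inl]
        have hne : toJs A Sm ≠ toJs A Sm' := by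
          intro h
          rw [hu, hu'] at hsy
          exact hsy (by rw [toJs_inj h])
        exact reps_pair x.2 hA hne
      · simp only [Sum.elim_inl, Sum.elim_inr]
        exact (rep_K_pair x.2 k'.2).1
      · simp only [Sum.elim_inl, Sum.elim_inr]
        exact (rep_K_pair x.2 k.2).2
      · exfalso
        rw [hu, hu'] at hsy
        exact hsy (by rw [Subtype.ext (K_unique h1 k.2 k'.2)])⟩
  invFun zw := ⟨Gfun2 A eR eS zw.1, by
    intro i j hij
    by_cases hi : A i = 0 <;> by_cases hj : A j = 0
    · exact absurd (K_unique h1 hi hj) hij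
    · -- i zero, j nonzero
      rw [Gfun2_zero A eR eS zw.1 hi]
      refine ⟨fun h => absurd (h ▸ hi) hj,
        fun h => absurd (by rw [hi] at h; exact neg_eq_zero.mp h.symm) hj, ?_, ?_⟩
      all_goals by_cases hb : 2 ≤ ((cls A j hj : Set (Fin n))).ncard
      · rw [Gfun2_big A eR eS zw.1 hj hb]
        exact fun _ => Ne.symm (zw.2.2.2.1 _ _).1
      · rw [Gfun2_small A eR eS zw.1 hj hb]
        have hne : eS (Sum.inr ⟨i, hi⟩) ≠ eS (Sum.inl ⟨(cls A j hj : Set (Fin n)),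
            (cls A j hj).2, hb⟩) := fun h => by simpa using eS.injective h
        exact fun _ => (zw.2.2.2.2 _ _ hne).1
      · rw [Gfun2_big A eR eS zw.1 hj hb]
        exact fun _ => nadd.2 (neg_swap (zw.2.2.2.1 _ _).2)
      · rw [Gfun2_small A eR eS zw.1 hj hb]
        have hne : eS (Sum.inr ⟨i, hi⟩) ≠ eS (Sum.inl ⟨(cls A j hj : Set (Fin n)),
            (cls A j hj).2, hb⟩) := fun h => by simpa using eS.injective h
        exact fun _ => nadd.2 (zw.2.2.2.2 _ _ hne).2
    · -- i nonzero, j zero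
      rw [Gfun2_zero A eR eS zw.1 hj]
      refine ⟨fun h => absurd (h ▸ hj) hi,
        fun h => absurd (by rw [hj, neg_zero] at h; exact h) hi, ?_, ?_⟩
      all_goals by_cases hb : 2 ≤ ((cls A i hi : Set (Fin n))).ncard
      · rw [Gfun2_big A eR eS zw.1 hi hb]
        exact fun _ => (zw.2.2.2.1 _ _).1
      · rw [Gfun2_small A eR eS zw.1 hi hb]
        have hne : eS (Sum.inl ⟨(cls A i hi : Set (Fin n)), (cls A i hi).2, hb⟩) ≠
            eS (Sum.inr ⟨j, hj⟩) := fun h => by simpa using eS.injective h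
        exact fun _ => (zw.2.2.2.2 _ _ hne).1
      · rw [Gfun2_big A eR eS zw.1 hi hb]
        exact fun _ => nadd.2 (zw.2.2.2.1 _ _).2
      · rw [Gfun2_small A eR eS zw.1 hi hb]
        have hne : eS (Sum.inl ⟨(cls A i hi : Set (Fin n)), (cls A i hi).2, hb⟩) ≠
            eS (Sum.inr ⟨j, hj⟩) := fun h => by simpa using eS.injective h
        exact fun _ => nadd.2 (zw.2.2.2.2 _ _ hne).2
    · -- both nonzero
      by_cases hAij : A i = A j
      · have hc : cls A i hi = cls A j hj := (cls_eq_iff A hi hj).2 hAij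
        have hb : 2 ≤ ((cls A i hi : Set (Fin n))).ncard := by
          have : 1 < ((cls A i hi : Set (Fin n))).ncard :=
            (Set.one_lt_ncard (Set.toFinite _)).2
              ⟨i, mem_cls A i hi, j, hAij.symm, hij⟩
          omega
        have hbj : 2 ≤ ((cls A j hj : Set (Fin n))).ncard := by rw [← hc]; exact hb
        rw [Gfun2_big A eR eS zw.1 hi hb, Gfun2_big A eR eS zw.1 hj hbj]
        have hidx : (⟨(cls A i hi : Set (Fin n)), (cls A i hi).2, hb⟩ : ↥(Jb A)) =
            ⟨(cls A j hj : Set (Fin n)), (cls A j hj).2, hbj⟩ :=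
          Subtype.ext (congrArg (Subtype.val : ↥(Jset A) → Set (Fin n)) hc)
        rw [hidx]
        exact ⟨fun _ => rfl, fun h => absurd h (hA i j hij hi hj), fun h => absurd hAij h,
          fun _ => two_mul_ne (zw.2.1 _)⟩
      · have hc : cls A i hi ≠ cls A j hj := fun h => hAij ((cls_eq_iff A hi hj).1 h)
        refine ⟨fun h => absurd h hAij, fun h => absurd h (hA i j hij hi hj), ?_, ?_⟩
        all_goals
          by_cases hbi : 2 ≤ ((cls A i hi : Set (Fin n))).ncard <;>
          by_cases hbj : 2 ≤ ((cls A j hj : Set (Fin n))).ncard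
        · rw [Gfun2_big A eR eS zw.1 hi hbi, Gfun2_big A eR eS zw.1 hj hbj]
          have hne : eR ⟨(cls A i hi : Set (Fin n)), (cls A i hi).2, hbi⟩ ≠
              eR ⟨(cls A j hj : Set (Fin n)), (cls A j hj).2, hbj⟩ := by
            intro h
            exact hc (Subtype.ext (congrArg
              (Subtype.val : ↥(Jb A) → Set (Fin n)) (eR.injective h)))
          exact fun _ => (zw.2.2.1 _ _ hne).1
        · rw [Gfun2_big A eR eS zw.1 hi hbi, Gfun2_small A eR eS zw.1 hj hbj]
          exact fun _ => (zw.2.2.2.1 _ _).1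
        · rw [Gfun2_small A eR eS zw.1 hi hbi, Gfun2_big A eR eS zw.1 hj hbj]
          exact fun _ => Ne.symm (zw.2.2.2.1 _ _).1
        · rw [Gfun2_small A eR eS zw.1 hi hbi, Gfun2_small A eR eS zw.1 hj hbj]
          have hne : eS (Sum.inl ⟨(cls A i hi : Set (Fin n)), (cls A i hi).2, hbi⟩) ≠
              eS (Sum.inl ⟨(cls A j hj : Set (Fin n)), (cls A j hj).2, hbj⟩) := by
            intro h
            have := eS.injective h
            simp only [Sum.inl.injEq] at this
            exact hc (Subtype.ext (congrArg
              (Subtype.val : ↥(Js A) → Set (Fin n)) this))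
          exact fun _ => (zw.2.2.2.2 _ _ hne).1
        · rw [Gfun2_big A eR eS zw.1 hi hbi, Gfun2_big A eR eS zw.1 hj hbj]
          have hne : eR ⟨(cls A i hi : Set (Fin n)), (cls A i hi).2, hbi⟩ ≠
              eR ⟨(cls A j hj : Set (Fin n)), (cls A j hj).2, hbj⟩ := by
            intro h
            exact hc (Subtype.ext (congrArg
              (Subtype.val : ↥(Jb A) → Set (Fin n)) (eR.injective h)))
          exact fun _ => nadd.2 (zw.2.2.1 _ _ hne).2
        · rw [Gfun2_big A eR eS zw.1 hi hbi, Gfun2_small A eR eS zw.1 hj hbj]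
          exact fun _ => nadd.2 (zw.2.2.2.1 _ _).2
        · rw [Gfun2_small A eR eS zw.1 hi hbi, Gfun2_big A eR eS zw.1 hj hbj]
          exact fun _ => nadd.2 (neg_swap (zw.2.2.2.1 _ _).2)
        · rw [Gfun2_small A eR eS zw.1 hi hbi, Gfun2_small A eR eS zw.1 hj hbj]
          have hne : eS (Sum.inl ⟨(cls A i hi : Set (Fin n)), (cls A i hi).2, hbi⟩) ≠
              eS (Sum.inl ⟨(cls A j hj : Set (Fin n)), (cls A j hj).2, hbj⟩) := by
            intro h
            have := eS.injective h
            simp only [Sum.inl.injEq] at this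
            exact hc (Subtype.ext (congrArg
              (Subtype.val : ↥(Js A) → Set (Fin n)) this))
          exact fun _ => nadd.2 (zw.2.2.2.2 _ _ hne).2⟩
  left_inv x := by
    apply Subtype.ext
    funext i
    show Gfun2 A eR eS (Fz2 A eR x.1, Fw2 A eS x.1) i = x.1 i
    by_cases hi : A i = 0
    · rw [Gfun2_zero A eR eS _ hi]
      show Fw2 A eS x.1 (eS (Sum.inr ⟨i, hi⟩)) = x.1 i
      unfold Fw2
      rw [Equiv.symm_apply_apply]
      rfl
    · by_cases hb : 2 ≤ ((cls A i hi : Set (Fin n))).ncard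
      · rw [Gfun2_big A eR eS _ hi hb]
        show Fz2 A eR x.1 (eR _) = x.1 i
        unfold Fz2
        rw [Equiv.symm_apply_apply]
        exact x_rep_cls x.2 i hi
      · rw [Gfun2_small A eR eS _ hi hb]
        show Fw2 A eS x.1 (eS (Sum.inl _)) = x.1 i
        unfold Fw2
        rw [Equiv.symm_apply_apply]
        exact x_rep_cls x.2 i hi
  right_inv zw := by
    apply Subtype.ext
    apply Prod.ext
    · funext t
      show Gfun2 A eR eS zw.1 (rep A (toJb A (eR.symm t))) = zw.1.1 t
      have hrep : A (rep A (toJb A (eR.symm t))) ≠ 0 := rep_ne A _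
      have hb : 2 ≤ ((cls A (rep A (toJb A (eR.symm t))) hrep : Set (Fin n))).ncard := by
        rw [cls_rep' (toJb A (eR.symm t)) hrep]
        exact (eR.symm t).2.2
      rw [Gfun2_big A eR eS zw.1 hrep hb]
      have hidx : (⟨(cls A (rep A (toJb A (eR.symm t))) hrep : Set (Fin n)),
          (cls A (rep A (toJb A (eR.symm t))) hrep).2, hb⟩ : ↥(Jb A)) = eR.symm t :=
        Subtype.ext (congrArg (Subtype.val : ↥(Jset A) → Set (Fin n))
          (cls_rep' (toJb A (eR.symm t)) hrep))
      rw [hidx, Equiv.apply_symm_apply]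
    · funext u
      show Fw2 A eS (Gfun2 A eR eS zw.1) u = zw.1.2 u
      unfold Fw2
      rcases hu : eS.symm u with Sm | k
      · simp only [Sum.elim_inl]
        have hrep : A (rep A (toJs A Sm)) ≠ 0 := rep_ne A _
        have hb : ¬ 2 ≤ ((cls A (rep A (toJs A Sm)) hrep : Set (Fin n))).ncard := by
          rw [cls_rep' (toJs A Sm) hrep]
          exact Sm.2.2
        rw [Gfun2_small A eR eS zw.1 hrep hb]
        have hidx : (⟨(cls A (rep A (toJs A Sm)) hrep : Set (Fin n)),
            (cls A (rep A (toJs A Sm)) hrep).2, hb⟩ : ↥(Js A)) = Sm :=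
          Subtype.ext (congrArg (Subtype.val : ↥(Jset A) → Set (Fin n))
            (cls_rep' (toJs A Sm) hrep))
        rw [hidx, ← hu, Equiv.apply_symm_apply]
      · simp only [Sum.elim_inr]
        rw [Gfun2_zero A eR eS zw.1 k.2]
        have : (⟨k.1, k.2⟩ : ↥({i : Fin n | A i = 0})) = k := rfl
        rw [this, ← hu, Equiv.apply_symm_apply]
  continuous_toFun := by
    apply Continuous.subtype_mk
    apply Continuous.prodMk
    · exact continuous_pi fun t => (continuous_apply _).comp continuous_subtype_val
    · apply continuous_pi
      intro u
      unfold Fw2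
      rcases hu : eS.symm u with Sm | k <;> simp only [hu, Sum.elim_inl, Sum.elim_inr]
      · exact (continuous_apply _).comp continuous_subtype_val
      · exact (continuous_apply _).comp continuous_subtype_val
  continuous_invFun := by
    apply Continuous.subtype_mk
    apply continuous_pi
    intro i
    by_cases hi : A i = 0
    · simp only [Gfun2, dif_pos hi]
      exact (continuous_apply _).comp (continuous_snd.comp continuous_subtype_val)
    · by_cases hb : 2 ≤ ((cls A i hi : Set (Fin n))).ncard
      · simp only [Gfun2, dif_neg hi, dif_pos hb]
        exact (continuous_apply _).comp (continuous_fst.comp continuous_subtype_val)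
      · simp only [Gfun2, dif_neg hi, dif_neg hb]
        exact (continuous_apply _).comp (continuous_snd.comp continuous_subtype_val)

end Homeo2

lemma B_eq {n : ℕ} (A : Fin n → ℂ)
    (ΦD : Set ((Fin n → ℂ) →ₗ[ℂ] ℂ))
    (hΦD : ΦD = {α | ∃ i j : Fin n, i < j ∧ (α = prj n i - prj n j ∨ α = prj n j - prj n i ∨
        α = prj n i + prj n j ∨ α = -(prj n i + prj n j))})
    (Φh : Set ((Fin n → ℂ) →ₗ[ℂ] ℂ)) (hΦh : Φh = {α ∈ ΦD | α A = 0})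
    (B : Set (Fin n → ℂ))
    (hB : B = {x | (∀ α ∈ Φh, α x = 0) ∧ ∀ β ∈ ΦD \ Φh, β x ≠ 0}) :
    B = {x | Pp A x} := by
  subst hΦD hΦh hB
  set D : Set ((Fin n → ℂ) →ₗ[ℂ] ℂ) :=
    {α | ∃ i j : Fin n, i < j ∧ (α = prj n i - prj n j ∨ α = prj n j - prj n i ∨
      α = prj n i + prj n j ∨ α = -(prj n i + prj n j))} with hD
  have hD1 : ∀ i j : Fin n, i ≠ j → (prj n i - prj n j) ∈ D := by
    intro i j hij
    rcases hij.lt_or_gt with h | h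
    · exact ⟨i, j, h, Or.inl rfl⟩
    · exact ⟨j, i, h, Or.inr (Or.inl rfl)⟩
  have hD2 : ∀ i j : Fin n, i ≠ j → (prj n i + prj n j) ∈ D := by
    intro i j hij
    rcases hij.lt_or_gt with h | h
    · exact ⟨i, j, h, Or.inr (Or.inr (Or.inl rfl))⟩
    · exact ⟨j, i, h, Or.inr (Or.inr (Or.inl (add_comm _ _)))⟩
  have hev : ∀ (i j : Fin n) (x : Fin n → ℂ), (prj n i - prj n j) x = x i - x j :=
    fun _ _ _ => rfl
  have hev2 : ∀ (i j : Fin n) (x : Fin n → ℂ), (prj n i + prj n j) x = x i + x j :=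
    fun _ _ _ => rfl
  ext x
  simp only [Set.mem_setOf_eq]
  constructor
  · rintro ⟨h1, h2⟩ i j hij
    refine ⟨?_, ?_, ?_, ?_⟩
    · intro hAij
      have := h1 _ ⟨hD1 i j hij, by rw [hev, sub_eq_zero]; exact hAij⟩
      rw [hev] at this
      exact sub_eq_zero.mp this
    · intro hAij
      have := h1 _ ⟨hD2 i j hij, by rw [hev2, hAij]; ring⟩
      rw [hev2] at this
      exact eq_neg_of_add_eq_zero_left this
    · intro hAij
      have hns : (prj n i - prj n j) ∉ {α ∈ D | α A = 0} := by
        rintro ⟨-, h0⟩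
        rw [hev] at h0
        exact hAij (sub_eq_zero.mp h0)
      have := h2 _ ⟨hD1 i j hij, hns⟩
      rw [hev] at this
      exact fun h => this (by rw [h]; ring)
    · intro hAij
      have hns : (prj n i + prj n j) ∉ {α ∈ D | α A = 0} := by
        rintro ⟨-, h0⟩
        rw [hev2] at h0
        exact hAij h0
      have := h2 _ ⟨hD2 i j hij, hns⟩
      rwa [hev2] at this
  · intro hP
    constructor
    · rintro α ⟨⟨i, j, hij, hc⟩, h0⟩
      have hne : i ≠ j := hij.ne
      rcases hc with rfl | rfl | rfl | rfl
      · rw [hev] at h0 ⊢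
        rw [sub_eq_zero] at h0 ⊢
        exact (hP i j hne).1 h0
      · rw [hev] at h0 ⊢
        rw [sub_eq_zero] at h0 ⊢
        exact (hP j i hne.symm).1 h0
      · rw [hev2] at h0 ⊢
        have := (hP i j hne).2.1 (eq_neg_of_add_eq_zero_left h0)
        rw [this]; ring
      · rw [LinearMap.neg_apply, hev2, neg_eq_zero] at h0 ⊢
        have := (hP i j hne).2.1 (eq_neg_of_add_eq_zero_left h0)
        rw [this]; ring
    · rintro β ⟨⟨i, j, hij, hc⟩, hβh⟩
      have hne : i ≠ j := hij.ne
      have hβ0 : β A ≠ 0 := fun h => hβh ⟨⟨i, j, hij, hc⟩, h⟩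
      rcases hc with rfl | rfl | rfl | rfl
      · rw [hev] at hβ0 ⊢
        have hAij : A i ≠ A j := fun h => hβ0 (by rw [h]; ring)
        exact sub_ne_zero.mpr ((hP i j hne).2.2.1 hAij)
      · rw [hev] at hβ0 ⊢
        have hAij : A j ≠ A i := fun h => hβ0 (by rw [h]; ring)
        exact sub_ne_zero.mpr ((hP j i hne.symm).2.2.1 hAij)
      · rw [hev2] at hβ0 ⊢
        exact (hP i j hne).2.2.2 hβ0
      · rw [LinearMap.neg_apply, hev2, neg_ne_zero] at hβ0 ⊢
        exact (hP i j hne).2.2.2 hβ0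

/-- Type-D restriction theorem: with `Φ_h ⊆ Φ_{D_n}` the functionals vanishing at `A`,
`m` the number of zero coordinates of `A`, `J` the nonzero level sets and `r` the number of
classes with at least two elements: if `m ≥ 2` the fundamental group of `B(Φ_h, Φ_{D_n})` at
`A` is `PB^{BC}_{|J|}`, and if `m ≤ 1` it is `π₁(X_{r,s})` with `s = (|J| − r) + m`. -/
theorem stmt16 (n : ℕ) (hn : 1 ≤ n) (A : Fin n → ℂ)
    (hA : ∀ i j, i ≠ j → A i ≠ 0 → A j ≠ 0 → A i ≠ -A j)
    (ΦD : Set ((Fin n → ℂ) →ₗ[ℂ] ℂ))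
    (hΦD : ΦD = {α | ∃ i j : Fin n, i < j ∧ (α = prj n i - prj n j ∨ α = prj n j - prj n i ∨
        α = prj n i + prj n j ∨ α = -(prj n i + prj n j))})
    (Φh : Set ((Fin n → ℂ) →ₗ[ℂ] ℂ)) (hΦh : Φh = {α ∈ ΦD | α A = 0})
    (K : Set (Fin n)) (hK : K = {i | A i = 0})
    (m : ℕ) (hm : m = K.ncard)
    (J : Set (Set (Fin n))) (hJ : J = {S | ∃ i, A i ≠ 0 ∧ S = {j | A j = A i}})
    (r : ℕ) (hr : r = {S ∈ J | 2 ≤ S.ncard}.ncard)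
    (s : ℕ) (hs : s = (J.ncard - r) + m)
    (B : Set (Fin n → ℂ))
    (hB : B = {x | (∀ α ∈ Φh, α x = 0) ∧ ∀ β ∈ ΦD \ Φh, β x ≠ 0}) :
    (2 ≤ m → ∃ (hAB : A ∈ B) (c : XBC J.ncard),
      Nonempty (FundamentalGroup B ⟨A, hAB⟩ ≃* FundamentalGroup (XBC J.ncard) c)) ∧
    (m ≤ 1 → ∃ (hAB : A ∈ B) (c : Xrs r s),
      Nonempty (FundamentalGroup B ⟨A, hAB⟩ ≃* FundamentalGroup (Xrs r s) c)) := by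
  have hBP : B = {x | Pp A x} := B_eq A ΦD hΦD Φh hΦh B hB
  subst hK hJ hm hr hs
  rw [hBP]
  constructor
  · intro h2
    let h := homeo1 A hA h2 (enumSet (Jset A))
    exact ⟨pp_self A, h ⟨A, pp_self A⟩, ⟨fgHomeo h ⟨A, pp_self A⟩⟩⟩
  · intro hm1
    have hcard : Nat.card (↥(Js A) ⊕ ↥({i : Fin n | A i = 0})) =
        ((Jset A).ncard - (Jb A).ncard) + ({i : Fin n | A i = 0}).ncard := by
      rw [Nat.card_sum, Nat.card_coe_set_eq, Nat.card_coe_set_eq]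
      have hdiff : Js A = Jset A \ Jb A := by
        ext T
        simp only [Js, Jb, Set.mem_setOf_eq, Set.mem_diff]
        tauto
      rw [hdiff, Set.ncard_diff (fun T hT => hT.1) (Set.toFinite _)]
    let h := homeo2 A hA hm1 (enumSet (Jb A)) (Finite.equivFinOfCardEq hcard)
    exact ⟨pp_self A, h ⟨A, pp_self A⟩, ⟨fgHomeo h ⟨A, pp_self A⟩⟩⟩
end
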